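/- arXiv:1803.09483 — 7 statements merged into one kernel-verified Lean document; each statement's English description precedes it below -/
import Mathlib

section
/- Let G be a connected weighted graph and let p and q be positive integers. If G admits no (q,p)-good edge separation, then G is (pq,p)-unbreakable. -/
open scoped Classical

/-- The total weight of the edges of `G` with one endpoint in `A` and the other in `B`. -/
noncomputable def cutWeight {V : Type*} [Fintype V] (G : SimpleGraph V) (w : Sym2 V → ℕ)
    (A B : Set V) : ℕ :=
  ∑ a : V, ∑ b : V, if a ∈ A ∧ b ∈ B ∧ G.Adj a b then w s(a, b) else 0

/-- `(A, Aᶜ)` is a `(q,p)`-good edge separation of the weighted graph `(G,w)`. -/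
def GoodSep {V : Type*} [Fintype V] (G : SimpleGraph V) (w : Sym2 V → ℕ)
    (q p : ℕ) (A : Finset V) : Prop :=
  q < A.card ∧ q < Aᶜ.card ∧ cutWeight G w ↑A ↑(Aᶜ : Finset V) ≤ p ∧
    (G.induce (↑A : Set V)).Connected ∧ (G.induce (↑(Aᶜ : Finset V) : Set V)).Connected

/-! Suppose `w(A, Aᶜ) ≤ p` while both sides have more than `pq` vertices. Edge weights are
positive, so at most `p` edges cross. As `G` is connected, every component of `G[A]` contains
an endpoint of a crossing edge, hence some component `C` of `G[A]` has more than `q` vertices.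
Every component of `G[Cᶜ]` is joined to `C` by an edge, which crosses `(A, Aᶜ)` because `C`
is a component of `G[A]`; as `Cᶜ ⊇ Aᶜ` is large, some component `D` of `G[Cᶜ]` has more than
`q` vertices. Then `(Dᶜ, D)` is a good edge separation: every edge leaving `D` goes to `C`
and crosses `(A, Aᶜ)`, and `G[Dᶜ]` is connected since it consists of `C` and the other
components of `G[Cᶜ]`, each attached to `C`. -/

section

variable {V : Type*} {G : SimpleGraph V}

variable (G) in
noncomputable def componentIn (S : Finset V) (v : V) : Finset V :=
  {u ∈ S | ∃ (hv : v ∈ S) (hu : u ∈ S), (G.induce (S : Set V)).Reachable ⟨v, hv⟩ ⟨u, hu⟩}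

variable {S : Finset V} {u v x : V}

lemma mem_componentIn :
    u ∈ componentIn G S v ↔
      ∃ (hv : v ∈ S) (hu : u ∈ S), (G.induce (S : Set V)).Reachable ⟨v, hv⟩ ⟨u, hu⟩ := by
  simp only [componentIn, Finset.mem_filter, and_iff_right_iff_imp]
  exact fun ⟨_, hu, _⟩ => hu

lemma componentIn_subset : componentIn G S v ⊆ S :=
  Finset.filter_subset _ _

lemma self_mem_componentIn (hv : v ∈ S) : v ∈ componentIn G S v :=
  mem_componentIn.mpr ⟨hv, hv, .refl _⟩

lemma mem_componentIn_of_adj (hu : u ∈ componentIn G S v) (hx : x ∈ S) (hadj : G.Adj u x) :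
    x ∈ componentIn G S v := by
  obtain ⟨hv, _, h⟩ := mem_componentIn.mp hu
  exact mem_componentIn.mpr ⟨hv, hx, h.trans (SimpleGraph.Adj.reachable (by simpa using hadj))⟩

lemma componentIn_eq_of_mem (hu : u ∈ componentIn G S v) :
    componentIn G S u = componentIn G S v := by
  obtain ⟨hv, hu', h⟩ := mem_componentIn.mp hu
  ext x
  simp only [mem_componentIn]
  exact ⟨fun ⟨_, hx, h'⟩ => ⟨hv, hx, h.trans h'⟩, fun ⟨_, hx, h'⟩ => ⟨hu', hx, h.symm.trans h'⟩⟩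

lemma connected_induce_componentIn (hv : v ∈ S) :
    (G.induce (componentIn G S v : Set V)).Connected := by
  refine G.induce_connected_of_patches v (self_mem_componentIn hv) fun {u} hu => ?_
  obtain ⟨_, _, ⟨p⟩⟩ := mem_componentIn.mp hu
  let q : G.Walk v u := p.map (SimpleGraph.Embedding.induce _).toHom
  refine ⟨{x | x ∈ q.support}, fun x hx => ?_, q.start_mem_support, q.end_mem_support,
    q.connected_induce_support.preconnected _ _⟩
  change x ∈ (p.map _).support at hx
  rw [SimpleGraph.Walk.support_map] at hx
  obtain ⟨⟨x, hxS⟩, hxp, rfl⟩ := List.mem_map.mp hx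
  exact mem_componentIn.mpr ⟨hv, hxS, ⟨p.takeUntil _ hxp⟩⟩

lemma exists_adj_componentIn_of_notMem (hG : G.Connected) (hv : v ∈ S) (hx : x ∉ S) :
    ∃ a ∈ componentIn G S v, ∃ b ∉ S, G.Adj a b := by
  obtain ⟨p⟩ := hG.preconnected v x
  obtain ⟨d, -, hd₁, hd₂⟩ := p.exists_boundary_dart (componentIn G S v : Set V)
    (self_mem_componentIn hv) fun h => hx (componentIn_subset h)
  exact ⟨d.fst, hd₁, d.snd, fun h => hd₂ (mem_componentIn_of_adj hd₁ h d.adj), d.adj⟩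

end

section

variable {V : Type*} [Fintype V] {G : SimpleGraph V} {w : Sym2 V → ℕ}

lemma subset_compl_componentIn_compl (T : Finset V) (v : V) : T ⊆ (componentIn G Tᶜ v)ᶜ :=
  fun _ hx => Finset.mem_compl.mpr fun h => Finset.mem_compl.mp (componentIn_subset h) hx

lemma connected_induce_compl_componentIn (hG : G.Connected) {T : Finset V}
    (hT : (G.induce (T : Set V)).Connected) (v : V) :
    (G.induce ((componentIn G Tᶜ v)ᶜ : Finset V)).Connected := by
  obtain ⟨⟨t, ht⟩⟩ := hT.nonempty
  have hTD : T ⊆ (componentIn G Tᶜ v)ᶜ := subset_compl_componentIn_compl T v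
  refine G.induce_connected_of_patches t (hTD ht) fun {u} hu => ?_
  by_cases huT : u ∈ T
  · exact ⟨T, by exact_mod_cast hTD, ht, huT, hT.preconnected _ _⟩
  have huT' : u ∈ Tᶜ := Finset.mem_compl.mpr huT
  obtain ⟨a, ha, b, hb, hab⟩ :=
    exists_adj_componentIn_of_notMem hG huT' (Finset.notMem_compl.mpr ht)
  have hKD : componentIn G Tᶜ u ⊆ (componentIn G Tᶜ v)ᶜ := fun x hx =>
    Finset.mem_compl.mpr fun hxD => Finset.mem_compl.mp hu <| by
      rw [← componentIn_eq_of_mem hxD, componentIn_eq_of_mem hx]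
      exact self_mem_componentIn huT'
  refine ⟨T ∪ componentIn G Tᶜ u, by exact_mod_cast Finset.union_subset hTD hKD,
    Or.inl ht, Or.inr (self_mem_componentIn huT'), ?_⟩
  exact (SimpleGraph.connected_induce_union hT.preconnected
    (connected_induce_componentIn huT').preconnected (Finset.notMem_compl.mp hb) ha
    hab.symm).preconnected _ _

lemma cutWeight_comm (A B : Set V) : cutWeight G w A B = cutWeight G w B A := by
  rw [cutWeight, Finset.sum_comm]
  refine Finset.sum_congr rfl fun a _ => Finset.sum_congr rfl fun b _ => ?_
  simp only [Sym2.eq_swap, G.adj_comm]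
  exact if_congr (by tauto) rfl rfl

lemma cutWeight_mono {A B A' B' : Set V}
    (h : ∀ a b, G.Adj a b → a ∈ A → b ∈ B → a ∈ A' ∧ b ∈ B') :
    cutWeight G w A B ≤ cutWeight G w A' B' := by
  refine Finset.sum_le_sum fun a _ => Finset.sum_le_sum fun b _ => ?_
  split_ifs with h₁ h₂
  · rfl
  · obtain ⟨ha, hb⟩ := h a b h₁.2.2 h₁.1 h₁.2.1
    exact absurd ⟨ha, hb, h₁.2.2⟩ h₂
  all_goals exact Nat.zero_le _

lemma cutWeight_componentIn_le (S : Finset V) (v : V) :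
    cutWeight G w ↑(componentIn G S v) ↑(componentIn G S v)ᶜ ≤ cutWeight G w ↑S ↑Sᶜ := by
  refine cutWeight_mono fun a b hab ha hb => ⟨componentIn_subset ha, ?_⟩
  simp only [Finset.coe_compl, Set.mem_compl_iff, Finset.mem_coe] at hb ⊢
  exact fun hbS => hb (mem_componentIn_of_adj ha hbS hab)

lemma cutWeight_eq_sum (A B : Set V) :
    cutWeight G w A B = ∑ d ∈ {d : V × V | d.1 ∈ A ∧ d.2 ∈ B ∧ G.Adj d.1 d.2}, w s(d.1, d.2) := by
  rw [cutWeight, Finset.sum_filter, ← Finset.univ_product_univ, Finset.sum_product]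

lemma card_le_cutWeight_mul (hG : G.Connected) (hw : ∀ e ∈ G.edgeSet, 0 < w e)
    {S : Finset V} (hS : Sᶜ.Nonempty) {q : ℕ} (hq : ∀ v ∈ S, (componentIn G S v).card ≤ q) :
    S.card ≤ cutWeight G w ↑S ↑Sᶜ * q := by
  set P : Finset (V × V) := {d | d.1 ∈ S ∧ d.2 ∉ S ∧ G.Adj d.1 d.2}
  obtain ⟨t, ht⟩ := hS
  have hcover : S ⊆ P.biUnion fun d => componentIn G S d.1 := by
    intro v hv
    obtain ⟨a, ha, b, hb, hab⟩ := exists_adj_componentIn_of_notMem hG hv (Finset.mem_compl.mp ht)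
    refine Finset.mem_biUnion.mpr ⟨(a, b), ?_, ?_⟩
    · simp [P, componentIn_subset ha, hb, hab]
    · rw [componentIn_eq_of_mem ha]
      exact self_mem_componentIn hv
  calc S.card ≤ ∑ d ∈ P, (componentIn G S d.1).card :=
        (Finset.card_le_card hcover).trans Finset.card_biUnion_le
    _ ≤ ∑ d ∈ P, w s(d.1, d.2) * q := by
        refine Finset.sum_le_sum fun d hd => ?_
        have hd' := (Finset.mem_filter.mp hd).2
        have hw₁ : 1 ≤ w s(d.1, d.2) := hw _ hd'.2.2
        calc (componentIn G S d.1).card ≤ q := hq _ hd'.1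
          _ ≤ w s(d.1, d.2) * q := Nat.le_mul_of_pos_left q hw₁
    _ = cutWeight G w ↑S ↑Sᶜ * q := by
        rw [cutWeight_eq_sum, Finset.sum_mul]
        congr 1
        ext
        simp [P]

lemma exists_lt_card_componentIn (hG : G.Connected) (hw : ∀ e ∈ G.edgeSet, 0 < w e)
    {S : Finset V} (hS : Sᶜ.Nonempty) {q : ℕ} (h : cutWeight G w ↑S ↑Sᶜ * q < S.card) :
    ∃ v ∈ S, q < (componentIn G S v).card := by
  by_contra! hq
  exact (card_le_cutWeight_mul hG hw hS hq).not_gt h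

end

theorem stmt_3_general {V : Type*} [Fintype V] (G : SimpleGraph V) (w : Sym2 V → ℕ)
    (hw : ∀ e ∈ G.edgeSet, 0 < w e) (hG : G.Connected)
    (p q : ℕ)
    (hno : ¬ ∃ A : Finset V, GoodSep G w q p A) :
    ∀ A : Finset V, cutWeight G w ↑A ↑(Aᶜ : Finset V) ≤ p →
      A.card ≤ p * q ∨ Aᶜ.card ≤ p * q := by
  intro A hA
  by_contra! ⟨hAbig, hAcbig⟩
  obtain ⟨a, ha, hC⟩ := exists_lt_card_componentIn hG hw (Finset.card_pos.mp (pos_of_gt hAcbig))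
    ((Nat.mul_le_mul_right q hA).trans_lt hAbig)
  set C := componentIn G A a
  have hCcut : cutWeight G w ↑Cᶜ ↑Cᶜᶜ ≤ p := by
    rw [compl_compl, cutWeight_comm]
    exact (cutWeight_componentIn_le A a).trans hA
  have hAC : Aᶜ ⊆ Cᶜ := Finset.compl_subset_compl.mpr componentIn_subset
  obtain ⟨v, hv, hD⟩ := exists_lt_card_componentIn hG hw
    (by rw [compl_compl]; exact ⟨a, self_mem_componentIn ha⟩)
    ((Nat.mul_le_mul_right q hCcut).trans_lt (hAcbig.trans_le (Finset.card_le_card hAC)))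
  set D := componentIn G Cᶜ v
  have hDc : q < Dᶜ.card := hC.trans_le (Finset.card_le_card (subset_compl_componentIn_compl C v))
  refine hno ⟨Dᶜ, hDc, by rwa [compl_compl], ?_,
    connected_induce_compl_componentIn hG (connected_induce_componentIn ha) v, ?_⟩
  · rw [compl_compl, cutWeight_comm]
    exact (cutWeight_componentIn_le Cᶜ v).trans hCcut
  · rw [compl_compl]
    exact connected_induce_componentIn hv

/-- If a connected weighted graph `G` (with positive edge weights) admits no `(q,p)`-good
edge separation, then `G` is `(pq,p)`-unbreakable: every partition `(A, Aᶜ)` of `V(G)`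
with `w(A, Aᶜ) ≤ p` has a side with at most `pq` vertices. -/
theorem stmt_3 {V : Type*} [Fintype V] (G : SimpleGraph V) (w : Sym2 V → ℕ)
    (hw : ∀ e ∈ G.edgeSet, 0 < w e) (hG : G.Connected)
    (p q : ℕ) (hp : 0 < p) (hq : 0 < q)
    (hno : ¬ ∃ A : Finset V, GoodSep G w q p A) :
    ∀ A : Finset V, cutWeight G w ↑A ↑(Aᶜ : Finset V) ≤ p →
      A.card ≤ p * q ∨ Aᶜ.card ≤ p * q :=
  stmt_3_general G w hw hG p q hno
end

section
/- Let G be a weighted graph, let X and Y be disjoint nonempty vertex sets, and let (A,B) be a partition of V(G) with X ⊆ A, Y ⊆ B and w(A,B) = λ_G(X,Y). Let Z be a partition of V(G) in which every part is contained in A or contained in B, let G' be obtained from G by the weighted contraction of every part of Z, and let X' (respectively Y') be the set of vertices of G' arising from parts that meet X (respectively Y). Then λ_{G'}(X',Y') = λ_G(X,Y). -/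
open scoped Classical

/-- The minimum total weight of an `(A,B)`-separator: an edge set `S` such that `G - S`
has no path from a vertex of `A` to a vertex of `B` (`+∞` if no separator exists). -/
noncomputable def sepW {V : Type*} [Fintype V] (G : SimpleGraph V) (w : Sym2 V → ℕ)
    (A B : Set V) : ℕ∞ :=
  sInf {c : ℕ∞ | ∃ S : Finset (Sym2 V), ↑S ⊆ G.edgeSet ∧ (∑ e ∈ S, (w e : ℕ∞)) = c ∧
    ∀ a ∈ A, ∀ b ∈ B, ¬ (G.deleteEdges ↑S).Reachable a b}

/-- The graph obtained from `G` by the weighted contraction of every class of the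
equivalence relation `σ`: two classes are adjacent iff some edge of `G` joins them. -/
noncomputable def quotG {V : Type*} (G : SimpleGraph V) (σ : Setoid V) :
    SimpleGraph (Quotient σ) :=
  SimpleGraph.fromRel fun q q' =>
    ∃ a b, G.Adj a b ∧ Quotient.mk σ a = q ∧ Quotient.mk σ b = q'

/-- The edge weights of the quotient graph: the weight of an edge between two classes is
the total weight of the edges of `G` between them. -/
noncomputable def quotW {V : Type*} [Fintype V] (G : SimpleGraph V) (w : Sym2 V → ℕ)
    (σ : Setoid V) : Sym2 (Quotient σ) → ℕ :=
  fun e => ∑ e' ∈ G.edgeFinset, if Sym2.map (Quotient.mk σ) e' = e then w e' else 0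

/-- Let `G` be a weighted graph, `X` and `Y` disjoint nonempty vertex sets, and `(A, Aᶜ)`
a partition of `V(G)` with `X ⊆ A`, `Y ⊆ Aᶜ` and `w(A, Aᶜ) = λ_G(X,Y)`. If every class of
the equivalence relation `σ` is contained in `A` or in `Aᶜ`, `G'` is obtained from `G` by
contracting every class of `σ`, and `X'` (resp. `Y'`) is the set of vertices of `G'`
arising from classes meeting `X` (resp. `Y`), then `λ_{G'}(X',Y') = λ_G(X,Y)`. -/
theorem stmt_5 {V : Type*} [Fintype V] (G : SimpleGraph V) (w : Sym2 V → ℕ)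
    (hw : ∀ e ∈ G.edgeSet, 0 < w e)
    (X Y : Set V) (hXY : Disjoint X Y) (hX : X.Nonempty) (hY : Y.Nonempty)
    (A : Set V) (hXA : X ⊆ A) (hYB : Y ⊆ Aᶜ)
    (hmin : (cutWeight G w A Aᶜ : ℕ∞) = sepW G w X Y)
    (σ : Setoid V) (hσ : ∀ a b : V, σ.r a b → (a ∈ A ↔ b ∈ A)) :
    sepW (quotG G σ) (quotW G w σ) (Quotient.mk σ '' X) (Quotient.mk σ '' Y)
      = sepW G w X Y := by
  classical
  set mk : V → Quotient σ := Quotient.mk σ with hmkdef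
  set A' : Set (Quotient σ) := mk '' A with hA'def
  have memA' : ∀ a : V, mk a ∈ A' ↔ a ∈ A := by
    intro a
    constructor
    · rintro ⟨x, hx, hxa⟩
      exact (hσ x a (Quotient.exact hxa)).mp hx
    · intro ha; exact ⟨a, ha, rfl⟩
  -- general sum identity: sum of quotient weights over T equals sum over preimage edges
  have hsumGen : ∀ T : Finset (Sym2 (Quotient σ)),
      (∑ e' ∈ T, quotW G w σ e') =
        ∑ e ∈ G.edgeFinset.filter (fun e => Sym2.map mk e ∈ T), w e := by
    intro T
    unfold quotW
    rw [Finset.sum_comm, Finset.sum_filter]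
    refine Finset.sum_congr rfl fun e _ => ?_
    exact Finset.sum_ite_eq T (Sym2.map mk e) (fun _ => w e)
  -- the special separator in the quotient: edges crossing A'
  set S' : Finset (Sym2 (Quotient σ)) := (quotG G σ).edgeFinset.filter
      (fun e => ∃ q q', e = s(q, q') ∧ q ∈ A' ∧ q' ∉ A') with hS'def
  have mapEdge : ∀ a b : V, G.Adj a b →
      (Sym2.map mk s(a, b) ∈ S' ↔ ((a ∈ A ∧ b ∉ A) ∨ (b ∈ A ∧ a ∉ A))) := by
    intro a b hab
    rw [Sym2.map_pair_eq, hS'def, Finset.mem_filter]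
    constructor
    · rintro ⟨-, q, q', heq, hq, hq'⟩
      rw [Sym2.eq_iff] at heq
      rcases heq with ⟨h1, h2⟩ | ⟨h1, h2⟩
      · refine Or.inl ⟨(memA' a).mp (h1 ▸ hq), fun hb => hq' ?_⟩
        exact h2 ▸ (memA' b).mpr hb
      · refine Or.inr ⟨(memA' b).mp (h2 ▸ hq), fun ha => hq' ?_⟩
        exact h1 ▸ (memA' a).mpr ha
    · intro hcross
      have hmkne : ∀ u v : V, G.Adj u v → u ∈ A → v ∉ A → mk u ≠ mk v := by
        intro u v huv hu hv h
        exact hv ((hσ u v (Quotient.exact h)).mp hu)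
      have hadj : ∀ u v : V, G.Adj u v → u ∈ A → v ∉ A →
          (quotG G σ).Adj (mk u) (mk v) := by
        intro u v huv hu hv
        rw [quotG, SimpleGraph.fromRel_adj]
        exact ⟨hmkne u v huv hu hv, Or.inl ⟨u, v, huv, rfl, rfl⟩⟩
      rcases hcross with ⟨ha, hb⟩ | ⟨hb, ha⟩
      · refine ⟨SimpleGraph.mem_edgeFinset.mpr (hadj a b hab ha hb), mk a, mk b, rfl,
          (memA' a).mpr ha, fun h => hb ((memA' b).mp h)⟩
      · refine ⟨SimpleGraph.mem_edgeFinset.mpr ?_, mk b, mk a, Sym2.eq_swap,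
          (memA' b).mpr hb, fun h => ha ((memA' a).mp h)⟩
        exact (hadj b a hab.symm hb ha).symm
  -- reachability in quotient minus S' preserves A'
  have key : ∀ q r : Quotient σ, ((quotG G σ).deleteEdges ↑S').Reachable q r →
      q ∈ A' → r ∈ A' := by
    intro q r hre
    obtain ⟨p⟩ := hre
    induction p with
    | nil => exact id
    | @cons u v c h p ih =>
      intro hu
      apply ih
      rw [SimpleGraph.deleteEdges_adj] at h
      by_contra hv
      apply h.2
      rw [Finset.mem_coe, hS'def, Finset.mem_filter]
      exact ⟨SimpleGraph.mem_edgeFinset.mpr h.1, u, v, rfl, hu, hv⟩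
  have hmkY : ∀ y ∈ Y, mk y ∉ A' := fun y hy h => hYB hy ((memA' y).mp h)
  -- direction ≤
  have h1 : sepW (quotG G σ) (quotW G w σ) (Quotient.mk σ '' X) (Quotient.mk σ '' Y)
      ≤ sepW G w X Y := by
    rw [← hmin]
    apply sInf_le
    refine ⟨S', ?_, ?_, ?_⟩
    · intro e he
      rw [Finset.mem_coe, hS'def, Finset.mem_filter] at he
      exact SimpleGraph.mem_edgeFinset.mp he.1
    · -- sum over S' equals the cut weight
      have hnat : (∑ e' ∈ S', quotW G w σ e') = cutWeight G w A Aᶜ := by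
        rw [hsumGen S']
        have hfilt : ∀ e ∈ G.edgeFinset, (Sym2.map mk e ∈ S') =
            (∃ a b, e = s(a, b) ∧ a ∈ A ∧ b ∉ A) := by
          intro e he
          induction e using Sym2.inductionOn with
          | hf a b =>
            have hab : G.Adj a b := SimpleGraph.mem_edgeFinset.mp he
            rw [eq_iff_iff, mapEdge a b hab]
            constructor
            · rintro (⟨ha, hb⟩ | ⟨hb, ha⟩)
              · exact ⟨a, b, rfl, ha, hb⟩
              · exact ⟨b, a, Sym2.eq_swap, hb, ha⟩
            · rintro ⟨x, y, hxy, hx, hy⟩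
              rw [Sym2.eq_iff] at hxy
              rcases hxy with ⟨h1, h2⟩ | ⟨h1, h2⟩
              · exact Or.inl ⟨h1 ▸ hx, h2 ▸ hy⟩
              · exact Or.inr ⟨h2 ▸ hx, h1 ▸ hy⟩
        rw [Finset.filter_congr (fun e he => by rw [hfilt e he])]
        -- now compare with cutWeight
        have hcw : cutWeight G w A Aᶜ = ∑ x ∈ (Finset.univ ×ˢ (Finset.univ : Finset V)).filter
            (fun x => x.1 ∈ A ∧ x.2 ∈ Aᶜ ∧ G.Adj x.1 x.2), w s(x.1, x.2) := by
          unfold cutWeight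
          rw [← Finset.sum_product', Finset.sum_filter]
          refine Finset.sum_congr rfl fun x _ => ?_
          by_cases h : x.1 ∈ A ∧ x.2 ∈ Aᶜ ∧ G.Adj x.1 x.2 <;> simp [h]
        rw [hcw]
        symm
        refine Finset.sum_bij (fun p _ => s(p.1, p.2)) ?_ ?_ ?_ ?_
        · rintro ⟨a, b⟩ hp
          rw [Finset.mem_filter] at hp
          obtain ⟨-, ha, hb, hab⟩ := hp
          rw [Finset.mem_filter]
          exact ⟨SimpleGraph.mem_edgeFinset.mpr hab, a, b, rfl, ha, hb⟩
        · rintro ⟨a, b⟩ hp ⟨a', b'⟩ hp' heq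
          rw [Finset.mem_filter] at hp hp'
          obtain ⟨-, ha, hb, -⟩ := hp
          obtain ⟨-, ha', hb', -⟩ := hp'
          rw [Sym2.eq_iff] at heq
          rcases heq with ⟨h1, h2⟩ | ⟨h1, h2⟩
          · exact Prod.ext_iff.mpr ⟨h1, h2⟩
          · exact absurd (h1 ▸ ha) (by simpa using hb')
        · intro e he
          rw [Finset.mem_filter] at he
          obtain ⟨hef, a, b, rfl, ha, hb⟩ := he
          have hab : G.Adj a b := SimpleGraph.mem_edgeFinset.mp hef
          refine ⟨(a, b), ?_, rfl⟩
          rw [Finset.mem_filter]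
          refine ⟨Finset.mem_product.mpr ⟨Finset.mem_univ _, Finset.mem_univ _⟩, ha, hb, hab⟩
        · rintro ⟨a, b⟩ _
          rfl
      rw [← Nat.cast_sum]
      exact_mod_cast congrArg (Nat.cast : ℕ → ℕ∞) hnat
    · rintro qx ⟨x, hx, rfl⟩ qy ⟨y, hy, rfl⟩ hre
      exact hmkY y hy (key _ _ hre ((memA' x).mpr (hXA hx)))
  -- direction ≥
  have h2 : sepW G w X Y ≤
      sepW (quotG G σ) (quotW G w σ) (Quotient.mk σ '' X) (Quotient.mk σ '' Y) := by
    apply le_sInf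
    rintro c ⟨T, hTsub, hTsum, hTsep⟩
    set S : Finset (Sym2 V) := G.edgeFinset.filter (fun e => Sym2.map mk e ∈ T) with hSdef
    have mapWalk : ∀ a b : V, (G.deleteEdges ↑S).Walk a b →
        ((quotG G σ).deleteEdges ↑T).Reachable (mk a) (mk b) := by
      intro a b p
      induction p with
      | nil => exact SimpleGraph.Reachable.refl _
      | @cons u v c h p ih =>
        rw [SimpleGraph.deleteEdges_adj] at h
        obtain ⟨hadj, hne⟩ := h
        by_cases hq : mk u = mk v
        · rw [hq]; exact ih
        · refine SimpleGraph.Reachable.trans (SimpleGraph.Adj.reachable ?_) ih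
          rw [SimpleGraph.deleteEdges_adj]
          constructor
          · rw [quotG, SimpleGraph.fromRel_adj]
            exact ⟨hq, Or.inl ⟨u, v, hadj, rfl, rfl⟩⟩
          · intro hmem
            apply hne
            rw [Finset.mem_coe, hSdef, Finset.mem_filter]
            refine ⟨SimpleGraph.mem_edgeFinset.mpr hadj, ?_⟩
            rwa [Sym2.map_pair_eq]
    apply sInf_le
    refine ⟨S, ?_, ?_, ?_⟩
    · intro e he
      rw [Finset.mem_coe, hSdef, Finset.mem_filter] at he
      exact SimpleGraph.mem_edgeFinset.mp he.1
    · rw [← hTsum, ← Nat.cast_sum, ← Nat.cast_sum]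
      exact_mod_cast congrArg (Nat.cast : ℕ → ℕ∞) (hsumGen T).symm
    · intro x hx y hy hre
      obtain ⟨p⟩ := hre
      exact hTsep (mk x) ⟨x, hx, rfl⟩ (mk y) ⟨y, hy, rfl⟩ (mapWalk x y p)
  exact le_antisymm h1 h2
end

section
/- Let (H,x) be a properly r-boundaried weighted graph and let p be a positive integer. Then there exists a properly r-boundaried weighted graph (H',x') with at most 2^{2^{r−1}} + r vertices such that for every r-boundaried weighted graph (F,y) the following holds: if the graph G = (F,y)⊕_b(H,x) is connected and λ(G) ≤ p, then (F,y)⊕_b(H',x') is connected and λ((F,y)⊕_b(H',x')) = λ(G). -/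
open scoped Classical

/-- The weighted connectivity of `(G,w)`: the largest `k ∈ ℕ∞` such that deleting any
edge set of total weight at most `k - 1` leaves `G` connected (`+∞` for a one-vertex
graph). -/
noncomputable def weightConn {V : Type*} [Fintype V] (G : SimpleGraph V) (w : Sym2 V → ℕ) :
    ℕ∞ :=
  sSup {k : ℕ∞ | ∀ S : Finset (Sym2 V), ↑S ⊆ G.edgeSet →
    (∑ e ∈ S, (w e : ℕ∞)) < k → (G.deleteEdges ↑S).Connected}

/-- `(H,x)` is a properly `r`-boundaried graph: the boundary vertices are pairwise
nonadjacent and every connected component of `H` contains a boundary vertex. -/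
def ProperB {VH : Type*} {r : ℕ} (H : SimpleGraph VH) (x : Fin r ↪ VH) : Prop :=
  (∀ i j, ¬ H.Adj (x i) (x j)) ∧ ∀ v : VH, ∃ i, H.Reachable v (x i)

/-- The boundary sum `(F,y) ⊕_b (H,x)`: disjoint copies of `F` and `H` with the `i`-th
boundary vertex of `H` identified with the `i`-th boundary vertex of `F`. -/
def BSum {VF VH : Type*} {r : ℕ} (F : SimpleGraph VF) (y : Fin r → VF)
    (H : SimpleGraph VH) (x : Fin r → VH) :
    SimpleGraph (VF ⊕ {v : VH // v ∉ Set.range x}) :=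
  SimpleGraph.fromRel fun a b =>
    match a, b with
    | Sum.inl a, Sum.inl b => F.Adj a b
    | Sum.inr a, Sum.inr b => H.Adj a.1 b.1
    | Sum.inl a, Sum.inr b => ∃ i, y i = a ∧ H.Adj (x i) b.1
    | Sum.inr _, Sum.inl _ => False

/-- Auxiliary (ordered) weight function for the boundary sum. -/
noncomputable def bw {VF VH : Type*} {r : ℕ} (wF : Sym2 VF → ℕ) (wH : Sym2 VH → ℕ)
    (y : Fin r → VF) (x : Fin r → VH) :
    (VF ⊕ {v : VH // v ∉ Set.range x}) → (VF ⊕ {v : VH // v ∉ Set.range x}) → ℕ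
  | Sum.inl a, Sum.inl b => wF s(a, b)
  | Sum.inr a, Sum.inr b => wH s(a.1, b.1)
  | Sum.inl a, Sum.inr b => ∑ i : Fin r, if y i = a then wH s(x i, b.1) else 0
  | Sum.inr a, Sum.inl b => ∑ i : Fin r, if y i = b then wH s(x i, a.1) else 0

/-- The edge weights of the boundary sum `(F,y) ⊕_b (H,x)`, inherited from `wF` and
`wH`. -/
noncomputable def BSumW {VF VH : Type*} {r : ℕ} (wF : Sym2 VF → ℕ) (wH : Sym2 VH → ℕ)
    (y : Fin r → VF) (x : Fin r → VH) :
    Sym2 (VF ⊕ {v : VH // v ∉ Set.range x}) → ℕ :=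
  Sym2.lift ⟨bw wF wH y x, by
    intro u v
    cases u <;> cases v <;> simp only [bw] <;> first | rfl | rw [Sym2.eq_swap]⟩


/-! For every boundary trace `A ⊆ Fin r`, fix a minimum-weight vertex set of `H` with trace `A`
that splits the interior; it suffices to do this for the `2 ^ (r - 1)` traces avoiding the last
index, since complements of minimum cuts are minimum cuts for the complementary trace. Identifying
interior vertices that lie on the same side of all these cuts gives `H'` with at most
`2 ^ 2 ^ (r - 1) + r` vertices. A cut of a boundary sum splits into a cut of `F` and a cut of `H`
with the same boundary trace. Replacing the `H`-part by the chosen minimum cut, a union of classes,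
shows that each cut of `(F,y) ⊕_b (H,x)` is dominated by a cut of `(F,y) ⊕_b (H',x')`; conversely,
cuts of the latter pull back along the quotient map with the same weight. So the two boundary sums
have the same lower bounds for their nontrivial cuts, hence the same connectivity and the same
weighted connectivity. -/

section Cuts

variable {V : Type*}

noncomputable def SimpleGraph.arcWeight (G : SimpleGraph V) (w : Sym2 V → ℕ) (a b : V) : ℕ :=
  if G.Adj a b then w s(a, b) else 0

theorem SimpleGraph.arcWeight_comm (G : SimpleGraph V) (w : Sym2 V → ℕ) (a b : V) :
    G.arcWeight w a b = G.arcWeight w b a := by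
  simp only [SimpleGraph.arcWeight, G.adj_comm a b, Sym2.eq_swap]

variable [Fintype V]

noncomputable def cutSum (ω : V → V → ℕ) (X : Set V) : ℕ :=
  ∑ a, ∑ b, if a ∈ X ∧ b ∉ X then ω a b else 0

theorem cutSum_congr {ω ω' : V → V → ℕ} (h : ∀ a b, a ≠ b → ω a b = ω' a b) (X : Set V) :
    cutSum ω X = cutSum ω' X := by
  refine Fintype.sum_congr _ _ fun a => Fintype.sum_congr _ _ fun b => ?_
  split_ifs with hab
  · exact h a b fun hab' => hab.2 (hab' ▸ hab.1)
  · rfl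

theorem cutSum_compl {ω : V → V → ℕ} (hω : ∀ a b, ω a b = ω b a) (X : Set V) :
    cutSum ω Xᶜ = cutSum ω X := by
  rw [cutSum, Finset.sum_comm]
  refine Fintype.sum_congr _ _ fun a => Fintype.sum_congr _ _ fun b => ?_
  simp only [Set.mem_compl_iff, not_not, hω b a, and_comm]

noncomputable def SimpleGraph.cutEdges (G : SimpleGraph V) (X : Set V) : Finset (Sym2 V) :=
  ({p : V × V | p.1 ∈ X ∧ p.2 ∉ X ∧ G.Adj p.1 p.2} : Finset (V × V)).image fun p => s(p.1, p.2)

theorem SimpleGraph.cutEdges_subset_edgeSet (G : SimpleGraph V) (X : Set V) :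
    ↑(G.cutEdges X) ⊆ G.edgeSet := by
  intro e he
  obtain ⟨p, hp, rfl⟩ := Finset.mem_image.1 he
  exact (Finset.mem_filter.1 hp).2.2.2

theorem SimpleGraph.sum_cutEdges (G : SimpleGraph V) (w : Sym2 V → ℕ) (X : Set V) :
    ∑ e ∈ G.cutEdges X, w e = cutSum (G.arcWeight w) X := by
  rw [SimpleGraph.cutEdges, Finset.sum_image, Finset.sum_filter, Fintype.sum_prod_type]
  · simp only [cutSum, SimpleGraph.arcWeight, ← ite_and, and_assoc]
  · rintro p hp q hq hpq
    simp only [Finset.coe_filter, Finset.mem_univ, true_and, Set.mem_ofPred_eq] at hp hq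
    rcases Sym2.mk_eq_mk_iff.1 hpq with h | rfl
    · exact h
    · exact absurd hp.1 hq.2.1

theorem SimpleGraph.not_connected_deleteEdges_cutEdges (G : SimpleGraph V) {X : Set V}
    (hX : X.Nonempty) (hXc : Xᶜ.Nonempty) : ¬ (G.deleteEdges ↑(G.cutEdges X)).Connected := by
  intro h
  obtain ⟨u, hu⟩ := hX
  obtain ⟨v, hv⟩ := hXc
  obtain ⟨d, -, hd, hd'⟩ := (h.preconnected u v).some.exists_boundary_dart X hu hv
  have hadj := d.adj
  rw [SimpleGraph.deleteEdges_adj] at hadj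
  exact hadj.2 (Finset.mem_image.2 ⟨d.toProd, by simp [hd, hd', hadj.1], rfl⟩)

/-- The vertices reachable from `u` in `G - S`, for a `u` that does not reach everything, form a
cut whose crossing edges all lie in `S`. -/
theorem SimpleGraph.exists_cutSum_le_of_not_connected (G : SimpleGraph V) (w : Sym2 V → ℕ)
    [Nonempty V] {S : Finset (Sym2 V)} (h : ¬ (G.deleteEdges ↑S).Connected) :
    ∃ X : Set V, X.Nonempty ∧ Xᶜ.Nonempty ∧ cutSum (G.arcWeight w) X ≤ ∑ e ∈ S, w e := by
  obtain ⟨u, v, huv⟩ : ∃ u v, ¬ (G.deleteEdges ↑S).Reachable u v := by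
    by_contra! hreach
    exact h ⟨hreach⟩
  refine ⟨{z | (G.deleteEdges ↑S).Reachable u z}, ⟨u, .refl u⟩, ⟨v, huv⟩, ?_⟩
  rw [← G.sum_cutEdges]
  refine Finset.sum_le_sum_of_subset fun e he => ?_
  obtain ⟨⟨a, b⟩, hab, rfl⟩ := Finset.mem_image.1 he
  simp only [Finset.mem_filter, Finset.mem_univ, true_and, Set.mem_ofPred_eq] at hab
  by_contra hS
  exact hab.2.1 (hab.1.trans (SimpleGraph.Adj.reachable
    (SimpleGraph.deleteEdges_adj.2 ⟨hab.2.2, hS⟩)))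

def cutBounds (G : SimpleGraph V) (w : Sym2 V → ℕ) : Set ℕ∞ :=
  {k | ∀ X : Set V, X.Nonempty → Xᶜ.Nonempty → k ≤ cutSum (G.arcWeight w) X}

theorem mem_cutBounds_iff {G : SimpleGraph V} {w : Sym2 V → ℕ} [Nonempty V] {k : ℕ∞} :
    k ∈ cutBounds G w ↔ ∀ S : Finset (Sym2 V), ↑S ⊆ G.edgeSet →
      (∑ e ∈ S, (w e : ℕ∞)) < k → (G.deleteEdges ↑S).Connected := by
  constructor
  · intro hk S _ hS
    by_contra hdis
    obtain ⟨X, hX, hXc, hle⟩ := G.exists_cutSum_le_of_not_connected w hdis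
    have := (hk X hX hXc).trans (Nat.cast_le.2 hle)
    rw [Nat.cast_sum] at this
    exact this.not_gt hS
  · intro hk X hX hXc
    by_contra! hlt
    refine G.not_connected_deleteEdges_cutEdges hX hXc
      (hk _ (G.cutEdges_subset_edgeSet X) ?_)
    rwa [← Nat.cast_sum, G.sum_cutEdges]

theorem weightConn_eq_sSup_cutBounds (G : SimpleGraph V) (w : Sym2 V → ℕ) [Nonempty V] :
    weightConn G w = sSup (cutBounds G w) := by
  rw [weightConn]
  congr 1
  ext k
  exact mem_cutBounds_iff.symm

theorem SimpleGraph.Connected.one_mem_cutBounds {G : SimpleGraph V} {w : Sym2 V → ℕ}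
    (hG : G.Connected) (hw : ∀ e ∈ G.edgeSet, 0 < w e) : 1 ∈ cutBounds G w := by
  have := hG.nonempty
  refine mem_cutBounds_iff.2 fun S hS hlt => ?_
  have hS0 : S = ∅ := by
    rw [Order.lt_one_iff, Finset.sum_eq_zero_iff] at hlt
    exact Finset.eq_empty_of_forall_notMem fun e he =>
      (hw e (hS he)).ne' (by exact_mod_cast hlt e he)
  simpa [hS0] using hG

theorem SimpleGraph.connected_of_one_mem_cutBounds {G : SimpleGraph V} {w : Sym2 V → ℕ}
    [Nonempty V] (h : 1 ∈ cutBounds G w) : G.Connected := by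
  simpa using mem_cutBounds_iff.1 h ∅ (by simp) (by simp)

theorem cutBounds_subset {V' : Type*} [Fintype V'] {G : SimpleGraph V} {w : Sym2 V → ℕ}
    {G' : SimpleGraph V'} {w' : Sym2 V' → ℕ}
    (h : ∀ X' : Set V', X'.Nonempty → X'ᶜ.Nonempty → ∃ X : Set V, X.Nonempty ∧ Xᶜ.Nonempty ∧
      cutSum (G.arcWeight w) X ≤ cutSum (G'.arcWeight w') X') :
    cutBounds G w ⊆ cutBounds G' w' := by
  intro k hk X' hX' hX'c
  obtain ⟨X, hX, hXc, hle⟩ := h X' hX' hX'c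
  exact (hk X hX hXc).trans (Nat.cast_le.2 hle)

theorem SimpleGraph.Connected.connected_and_weightConn_eq_of_cutBounds_eq {V' : Type*}
    [Fintype V'] [Nonempty V']
    {G : SimpleGraph V} {w : Sym2 V → ℕ} {G' : SimpleGraph V'} {w' : Sym2 V' → ℕ}
    (hG : G.Connected) (hw : ∀ e ∈ G.edgeSet, 0 < w e) (h : cutBounds G w = cutBounds G' w') :
    G'.Connected ∧ weightConn G' w' = weightConn G w := by
  have := hG.nonempty
  refine ⟨SimpleGraph.connected_of_one_mem_cutBounds (h ▸ hG.one_mem_cutBounds hw), ?_⟩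
  rw [weightConn_eq_sSup_cutBounds, weightConn_eq_sSup_cutBounds, h]

end Cuts

section Pushforward

variable {V W : Type*} [Fintype V]

noncomputable def pushArc (f : V → W) (ω : V → V → ℕ) (a b : W) : ℕ :=
  ∑ u with f u = a, ∑ v with f v = b, ω u v

theorem pushArc_comm {f : V → W} {ω : V → V → ℕ} (hω : ∀ u v, ω u v = ω v u) (a b : W) :
    pushArc f ω a b = pushArc f ω b a := by
  rw [pushArc, pushArc, Finset.sum_comm]
  simp only [hω]

theorem cutSum_pushArc [Fintype W] (f : V → W) (ω : V → V → ℕ) (X : Set W) :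
    cutSum (pushArc f ω) X = cutSum ω (f ⁻¹' X) := by
  calc cutSum (pushArc f ω) X
      = ∑ a, ∑ b, ∑ u with f u = a, ∑ v with f v = b,
          if f u ∈ X ∧ f v ∉ X then ω u v else 0 := by
        refine Fintype.sum_congr _ _ fun a => Fintype.sum_congr _ _ fun b => ?_
        calc _ = ∑ u with f u = a, ∑ v with f v = b, if a ∈ X ∧ b ∉ X then ω u v else 0 := by
              simp only [Finset.sum_ite_irrel, Finset.sum_const_zero, pushArc]
          _ = _ := by
              refine Finset.sum_congr rfl fun u hu => Finset.sum_congr rfl fun v hv => ?_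
              rw [(Finset.mem_filter.1 hu).2, (Finset.mem_filter.1 hv).2]
    _ = ∑ a, ∑ u with f u = a, ∑ b, ∑ v with f v = b,
          if f u ∈ X ∧ f v ∉ X then ω u v else 0 :=
        Fintype.sum_congr _ _ fun a => Finset.sum_comm
    _ = ∑ a, ∑ u with f u = a, ∑ v, if f u ∈ X ∧ f v ∉ X then ω u v else 0 :=
        Fintype.sum_congr _ _ fun a => Finset.sum_congr rfl fun u _ => Finset.sum_fiberwise _ _ _
    _ = cutSum ω (f ⁻¹' X) := Finset.sum_fiberwise _ _ _

theorem pushArc_eq_of_fibres {f : V → W} {ω : V → V → ℕ} {a b : W} {u₀ v₀ : V}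
    (ha : ∀ u, f u = a ↔ u = u₀) (hb : ∀ v, f v = b ↔ v = v₀) : pushArc f ω a b = ω u₀ v₀ := by
  simp [pushArc, Finset.sum_filter, ha, hb]

theorem pushArc_eq_zero_of_left {f : V → W} {ω : V → V → ℕ} {a : W} (ha : ∀ u, f u ≠ a)
    (b : W) : pushArc f ω a b = 0 := by
  simp [pushArc, ha]

theorem pushArc_eq_zero_of_right {f : V → W} {ω : V → V → ℕ} {b : W} (hb : ∀ v, f v ≠ b)
    (a : W) : pushArc f ω a b = 0 := by
  simp [pushArc, hb]

theorem cutSum_add {ω ω' : V → V → ℕ} (X : Set V) :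
    cutSum (ω + ω') X = cutSum ω X + cutSum ω' X := by
  simp only [cutSum, ← Finset.sum_add_distrib, Pi.add_apply, ← ite_add_zero]

end Pushforward

def CutsDominatedBy {V₁ V₂ : Type*} [Fintype V₁] [Fintype V₂] {r : ℕ}
    (H₁ : SimpleGraph V₁) (w₁ : Sym2 V₁ → ℕ) (x₁ : Fin r → V₁)
    (H₂ : SimpleGraph V₂) (w₂ : Sym2 V₂ → ℕ) (x₂ : Fin r → V₂) : Prop :=
  ∀ Z₁ : Set V₁, ∃ Z₂ : Set V₂, (∀ i, x₂ i ∈ Z₂ ↔ x₁ i ∈ Z₁) ∧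
    cutSum (H₂.arcWeight w₂) Z₂ ≤ cutSum (H₁.arcWeight w₁) Z₁ ∧
    ((Z₁ \ Set.range x₁).Nonempty → (Z₂ \ Set.range x₂).Nonempty) ∧
    ((Z₁ᶜ \ Set.range x₁).Nonempty → (Z₂ᶜ \ Set.range x₂).Nonempty)

section Quotient

variable {V W : Type*} (H : SimpleGraph V) (wH : Sym2 V → ℕ) (f : V → W)

def quotientGraph : SimpleGraph W where
  Adj a b := a ≠ b ∧ ∃ u v, f u = a ∧ f v = b ∧ H.Adj u v
  symm := ⟨fun _ _ ⟨hne, u, v, hu, hv, huv⟩ => ⟨hne.symm, v, u, hv, hu, huv.symm⟩⟩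
  loopless := ⟨fun _ h => h.1 rfl⟩

variable {H} in
theorem SimpleGraph.Reachable.map_quotientGraph {u v : V}
    (h : H.Reachable u v) : (quotientGraph H f).Reachable (f u) (f v) := by
  obtain ⟨p⟩ := h
  induction p with
  | nil => rfl
  | @cons a b _ hab _ ih =>
    refine SimpleGraph.Reachable.trans ?_ ih
    by_cases hf : f a = f b
    · rw [hf]
    · exact SimpleGraph.Adj.reachable ⟨hf, a, b, rfl, rfl, hab⟩

theorem properB_quotientGraph {r : ℕ} {x : Fin r ↪ V} {x' : Fin r ↪ W}
    (hf : Function.Surjective f) (hx' : ∀ v i, f v = x' i ↔ v = x i) (hx : ProperB H x) :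
    ProperB (quotientGraph H f) x' := by
  refine ⟨fun i j ⟨_, u, v, hu, hv, huv⟩ => ?_, fun κ => ?_⟩
  · rw [hx'] at hu hv
    exact hx.1 i j (hu ▸ hv ▸ huv)
  · obtain ⟨v, rfl⟩ := hf κ
    obtain ⟨i, hi⟩ := hx.2 v
    exact ⟨i, (hx' (x i) i).2 rfl ▸ hi.map_quotientGraph f⟩

variable [Fintype V]

noncomputable def quotientWeight : Sym2 W → ℕ :=
  Sym2.lift ⟨pushArc f (H.arcWeight wH), pushArc_comm (H.arcWeight_comm wH)⟩

theorem arcWeight_quotientGraph {a b : W} (hab : a ≠ b) :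
    (quotientGraph H f).arcWeight (quotientWeight H wH f) a b = pushArc f (H.arcWeight wH) a b := by
  rw [SimpleGraph.arcWeight]
  split_ifs with hadj
  · rfl
  · refine (Finset.sum_eq_zero fun u hu => Finset.sum_eq_zero fun v hv => if_neg ?_).symm
    exact fun huv => hadj ⟨hab, u, v, (Finset.mem_filter.1 hu).2, (Finset.mem_filter.1 hv).2, huv⟩

theorem cutSum_quotientGraph [Fintype W] (X : Set W) :
    cutSum ((quotientGraph H f).arcWeight (quotientWeight H wH f)) X =
      cutSum (H.arcWeight wH) (f ⁻¹' X) :=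
  (cutSum_congr (fun _ _ => arcWeight_quotientGraph H wH f) X).trans (cutSum_pushArc _ _ _)

theorem quotientWeight_pos (hwH : ∀ e ∈ H.edgeSet, 0 < wH e) :
    ∀ e ∈ (quotientGraph H f).edgeSet, 0 < quotientWeight H wH f e := by
  refine Sym2.ind fun a b ⟨_, u, v, hu, hv, huv⟩ => ?_
  refine Finset.sum_pos' (fun _ _ => Nat.zero_le _) ⟨u, by simpa using hu, ?_⟩
  refine Finset.sum_pos' (fun _ _ => Nat.zero_le _) ⟨v, by simpa using hv, ?_⟩
  rw [SimpleGraph.arcWeight, if_pos huv]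
  exact hwH _ huv

theorem quotientGraph_cutsDominatedBy [Fintype W] {r : ℕ} {x : Fin r ↪ V} {x' : Fin r ↪ W}
    (hf : Function.Surjective f) (hx' : ∀ v i, f v = x' i ↔ v = x i) :
    CutsDominatedBy (quotientGraph H f) (quotientWeight H wH f) x' H wH x := by
  have interior : ∀ S : Set W, (S \ Set.range x').Nonempty → (f ⁻¹' S \ Set.range x).Nonempty := by
    rintro S ⟨κ, hκ, hκx⟩
    obtain ⟨v, rfl⟩ := hf κ
    exact ⟨v, hκ, fun ⟨i, hi⟩ => hκx ⟨i, ((hx' v i).2 hi.symm).symm⟩⟩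
  intro Z
  refine ⟨f ⁻¹' Z, fun i => ?_, (cutSum_quotientGraph H wH f Z).ge, interior Z, interior Zᶜ⟩
  rw [Set.mem_preimage, (hx' (x i) i).2 rfl]

end Quotient

section BoundarySum

variable {VF VH : Type*} {r : ℕ} {F : SimpleGraph VF} {y : Fin r → VF}
  {H : SimpleGraph VH} {x : Fin r ↪ VH}

@[simp] theorem bsum_adj_inl_inl {a b : VF} :
    (BSum F y H x).Adj (.inl a) (.inl b) ↔ F.Adj a b := by
  simp only [BSum, SimpleGraph.fromRel_adj, ne_eq, Sum.inl.injEq, F.adj_comm b a, or_self]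
  exact and_iff_right_of_imp SimpleGraph.Adj.ne

@[simp] theorem bsum_adj_inr_inr {a b : {v // v ∉ Set.range x}} :
    (BSum F y H x).Adj (.inr a) (.inr b) ↔ H.Adj a b := by
  simp only [BSum, SimpleGraph.fromRel_adj, ne_eq, Sum.inr.injEq, H.adj_comm b, or_self]
  exact and_iff_right_of_imp fun h hab => h.ne (congrArg Subtype.val hab)

@[simp] theorem bsum_adj_inl_inr {a : VF} {b : {v // v ∉ Set.range x}} :
    (BSum F y H x).Adj (.inl a) (.inr b) ↔ ∃ i, y i = a ∧ H.Adj (x i) b := by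
  simp [BSum]

theorem bsumW_pos {wF : Sym2 VF → ℕ} {wH : Sym2 VH → ℕ}
    (hwF : ∀ e ∈ F.edgeSet, 0 < wF e) (hwH : ∀ e ∈ H.edgeSet, 0 < wH e) :
    ∀ e ∈ (BSum F y H x).edgeSet, 0 < BSumW wF wH y x e := by
  have cross : ∀ a b, (BSum F y H x).Adj (.inl a) (.inr b) →
      0 < BSumW wF wH y x s(.inl a, .inr b) := by
    rintro a b hab
    obtain ⟨i, rfl, hadj⟩ := bsum_adj_inl_inr.1 hab
    refine Finset.sum_pos' (fun _ _ => Nat.zero_le _) ⟨i, Finset.mem_univ i, ?_⟩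
    rw [if_pos rfl]
    exact hwH _ hadj
  refine Sym2.ind fun a b hab => ?_
  rcases a with a | a <;> rcases b with b | b
  · exact hwF _ (by simpa using hab)
  · exact cross a b hab
  · rw [Sym2.eq_swap]
    exact cross b a hab.symm
  · exact hwH _ (by simpa using hab)

variable (y x)

noncomputable def glue (v : VH) : VF ⊕ {v : VH // v ∉ Set.range x} :=
  if h : v ∈ Set.range x then .inl (y (x.invOfMemRange ⟨v, h⟩)) else .inr ⟨v, h⟩

theorem glue_apply_boundary (i : Fin r) : glue y x (x i) = .inl (y i) := by
  rw [glue, dif_pos ⟨i, rfl⟩, x.right_inv_of_invOfMemRange]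

theorem glue_apply_interior (q : {v : VH // v ∉ Set.range x}) : glue y x q = .inr q :=
  dif_neg q.2

variable {y x}

theorem glue_eq_inr_iff {v : VH} {q : {v : VH // v ∉ Set.range x}} :
    glue y x v = .inr q ↔ v = q := by
  rcases em (v ∈ Set.range x) with ⟨i, rfl⟩ | hv
  · simp only [glue_apply_boundary, reduceCtorEq, false_iff]
    exact fun h => q.2 ⟨i, h⟩
  · rw [glue_apply_interior y x ⟨v, hv⟩, Sum.inr.injEq, Subtype.ext_iff]

theorem glue_eq_inl_iff {v : VH} {c : VF} : glue y x v = .inl c ↔ ∃ i, x i = v ∧ y i = c := by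
  rcases em (v ∈ Set.range x) with ⟨i, rfl⟩ | hv
  · simp [glue_apply_boundary, x.injective.eq_iff]
  · rw [glue_apply_interior y x ⟨v, hv⟩]
    simpa using fun i h _ => hv ⟨i, h⟩

variable [Fintype VF] [Fintype VH]

theorem arcWeight_bsum (wF : Sym2 VF → ℕ) (wH : Sym2 VH → ℕ) (hy : Function.Injective y)
    (hx : ∀ i j, ¬ H.Adj (x i) (x j)) (a b : VF ⊕ {v : VH // v ∉ Set.range x}) :
    (BSum F y H x).arcWeight (BSumW wF wH y x) a b =
      pushArc Sum.inl (F.arcWeight wF) a b + pushArc (glue y x) (H.arcWeight wH) a b := by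
  have cross : ∀ c q, (BSum F y H x).arcWeight (BSumW wF wH y x) (.inl c) (.inr q) =
      pushArc Sum.inl (F.arcWeight wF) (.inl c) (.inr q) +
        pushArc (glue y x) (H.arcWeight wH) (.inl c) (.inr q) := by
    intro c q
    rw [pushArc_eq_zero_of_right (fun _ => Sum.inl_ne_inr), zero_add]
    rcases em (c ∈ Set.range y) with ⟨i, rfl⟩ | hc
    · rw [pushArc_eq_of_fibres (u₀ := x i) (v₀ := q)
        (fun v => by simp [glue_eq_inl_iff, hy.eq_iff, eq_comm]) fun _ => glue_eq_inr_iff]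
      simp [SimpleGraph.arcWeight, hy.eq_iff, BSumW, bw]
    · rw [pushArc_eq_zero_of_left fun v h => hc (by
        obtain ⟨i, -, rfl⟩ := glue_eq_inl_iff.1 h
        exact ⟨i, rfl⟩)]
      simp only [SimpleGraph.arcWeight, bsum_adj_inl_inr, ite_eq_right_iff]
      exact fun ⟨i, hi, _⟩ => absurd ⟨i, hi⟩ hc
  rcases a with c | p <;> rcases b with d | q
  · rw [pushArc_eq_of_fibres (fun _ => Sum.inl_injective.eq_iff) fun _ => Sum.inl_injective.eq_iff]
    simp only [SimpleGraph.arcWeight, bsum_adj_inl_inl]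
    refine (add_eq_left.2 ?_).symm
    refine Finset.sum_eq_zero fun u hu => Finset.sum_eq_zero fun v hv => ?_
    obtain ⟨i, rfl, -⟩ := glue_eq_inl_iff.1 (by simpa using hu)
    obtain ⟨j, rfl, -⟩ := glue_eq_inl_iff.1 (by simpa using hv)
    exact if_neg (hx i j)
  · exact cross c q
  · rw [SimpleGraph.arcWeight_comm, pushArc_comm (F.arcWeight_comm wF),
      pushArc_comm (H.arcWeight_comm wH)]
    exact cross d p
  · rw [pushArc_eq_zero_of_left (fun _ => Sum.inl_ne_inr),
      pushArc_eq_of_fibres (fun _ => glue_eq_inr_iff) fun _ => glue_eq_inr_iff, zero_add]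
    simp only [SimpleGraph.arcWeight, bsum_adj_inr_inr]
    rfl

theorem cutSum_bsum (wF : Sym2 VF → ℕ) (wH : Sym2 VH → ℕ) (hy : Function.Injective y)
    (hx : ∀ i j, ¬ H.Adj (x i) (x j)) (X : Set (VF ⊕ {v : VH // v ∉ Set.range x})) :
    cutSum ((BSum F y H x).arcWeight (BSumW wF wH y x)) X =
      cutSum (F.arcWeight wF) (Sum.inl ⁻¹' X) + cutSum (H.arcWeight wH) (glue y x ⁻¹' X) := by
  have hω : (BSum F y H x).arcWeight (BSumW wF wH y x) =
      pushArc Sum.inl (F.arcWeight wF) + pushArc (glue y x) (H.arcWeight wH) := by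
    ext a b
    exact arcWeight_bsum wF wH hy hx a b
  rw [hω, cutSum_add, cutSum_pushArc, cutSum_pushArc]

end BoundarySum

section BoundarySumCuts

variable {VF V₁ V₂ : Type*} {r : ℕ}
  {F : SimpleGraph VF} {wF : Sym2 VF → ℕ} {y : Fin r ↪ VF}
  {H₁ : SimpleGraph V₁} {w₁ : Sym2 V₁ → ℕ} {x₁ : Fin r ↪ V₁}
  {H₂ : SimpleGraph V₂} {w₂ : Sym2 V₂ → ℕ} {x₂ : Fin r ↪ V₂}

theorem nonempty_of_glue_preimage {X₁ : Set (VF ⊕ {v : V₁ // v ∉ Set.range x₁})}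
    {X₂ : Set (VF ⊕ {v : V₂ // v ∉ Set.range x₂})} (hF : ∀ a, .inl a ∈ X₁ → .inl a ∈ X₂)
    (hH : (glue y x₁ ⁻¹' X₁ \ Set.range x₁).Nonempty →
      (glue y x₂ ⁻¹' X₂ \ Set.range x₂).Nonempty)
    (h : X₁.Nonempty) : X₂.Nonempty := by
  obtain ⟨a | q, ha⟩ := h
  · exact ⟨_, hF a ha⟩
  · obtain ⟨v, hv, -⟩ := hH ⟨q, by rwa [Set.mem_preimage, glue_apply_interior], q.2⟩
    exact ⟨_, hv⟩

variable [Fintype VF] [Fintype V₁] [Fintype V₂]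

/-- Replacing the `H₁`-side of a cut by a dominating cut of `H₂` with the same boundary trace. -/
theorem exists_bsum_cut_le (hdom : CutsDominatedBy H₁ w₁ x₁ H₂ w₂ x₂)
    (hx₁ : ∀ i j, ¬ H₁.Adj (x₁ i) (x₁ j)) (hx₂ : ∀ i j, ¬ H₂.Adj (x₂ i) (x₂ j))
    (X₁ : Set (VF ⊕ {v : V₁ // v ∉ Set.range x₁})) (hX₁ : X₁.Nonempty) (hX₁c : X₁ᶜ.Nonempty) :
    ∃ X₂ : Set (VF ⊕ {v : V₂ // v ∉ Set.range x₂}), X₂.Nonempty ∧ X₂ᶜ.Nonempty ∧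
      cutSum ((BSum F y H₂ x₂).arcWeight (BSumW wF w₂ y x₂)) X₂ ≤
        cutSum ((BSum F y H₁ x₁).arcWeight (BSumW wF w₁ y x₁)) X₁ := by
  obtain ⟨Z₂, htrace, hle, hin, hout⟩ := hdom (glue y x₁ ⁻¹' X₁)
  set X₂ : Set (VF ⊕ {v : V₂ // v ∉ Set.range x₂}) :=
    {t | Sum.elim (fun a => .inl a ∈ X₁) (fun q => q.1 ∈ Z₂) t}
  have hZ₂ : glue y x₂ ⁻¹' X₂ = Z₂ := by
    ext v
    rcases em (v ∈ Set.range x₂) with ⟨i, rfl⟩ | hv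
    · rw [htrace, Set.mem_preimage, Set.mem_preimage, glue_apply_boundary, glue_apply_boundary]
      rfl
    · rw [Set.mem_preimage, glue_apply_interior y x₂ ⟨v, hv⟩]
      rfl
  refine ⟨X₂, nonempty_of_glue_preimage (X₁ := X₁) (X₂ := X₂) (fun _ => id) (hZ₂ ▸ hin) hX₁,
    nonempty_of_glue_preimage (X₁ := X₁ᶜ) (X₂ := X₂ᶜ) (fun _ => id) (hZ₂ ▸ hout) hX₁c, ?_⟩
  rw [cutSum_bsum wF w₂ y.injective hx₂, cutSum_bsum wF w₁ y.injective hx₁, hZ₂]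
  exact Nat.add_le_add_left hle _

theorem bsum_connected_and_weightConn_eq (h₁₂ : CutsDominatedBy H₁ w₁ x₁ H₂ w₂ x₂)
    (h₂₁ : CutsDominatedBy H₂ w₂ x₂ H₁ w₁ x₁)
    (hx₁ : ∀ i j, ¬ H₁.Adj (x₁ i) (x₁ j)) (hx₂ : ∀ i j, ¬ H₂.Adj (x₂ i) (x₂ j))
    (hwF : ∀ e ∈ F.edgeSet, 0 < wF e) (hw₁ : ∀ e ∈ H₁.edgeSet, 0 < w₁ e)
    (hconn : (BSum F y H₁ x₁).Connected) :
    (BSum F y H₂ x₂).Connected ∧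
      weightConn (BSum F y H₂ x₂) (BSumW wF w₂ y x₂) =
        weightConn (BSum F y H₁ x₁) (BSumW wF w₁ y x₁) := by
  have : Nonempty (VF ⊕ {v : V₂ // v ∉ Set.range x₂}) := by
    obtain ⟨a | q⟩ := hconn.nonempty
    · exact ⟨.inl a⟩
    · obtain ⟨Z₂, -, -, hin, -⟩ := h₁₂ Set.univ
      obtain ⟨v, -, hv⟩ := hin ⟨q, trivial, q.2⟩
      exact ⟨.inr ⟨v, hv⟩⟩
  refine hconn.connected_and_weightConn_eq_of_cutBounds_eq (bsumW_pos hwF hw₁)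
    ((cutBounds_subset ?_).antisymm (cutBounds_subset ?_))
  · exact exists_bsum_cut_le h₂₁ hx₂ hx₁
  · exact exists_bsum_cut_le h₁₂ hx₁ hx₂

end BoundarySumCuts

section Compression

variable {r : ℕ} {VH : Type*}

/-- Traces avoiding the last index: one from each complementary pair, whence the exponent
`2 ^ (r - 1)`. -/
def lowerIndexSet (c : Finset (Fin (r - 1))) : Finset (Fin r) :=
  c.map (Fin.castLEEmb (Nat.sub_le r 1))

theorem exists_lowerIndexSet_eq_or_compl (A : Finset (Fin r)) :
    ∃ c, lowerIndexSet c = A ∨ lowerIndexSet c = Aᶜ := by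
  have lower : ∀ B : Finset (Fin r), (∀ i ∈ B, (i : ℕ) < r - 1) → ∃ c, lowerIndexSet c = B := by
    refine fun B hB =>
      ⟨({j | Fin.castLE (Nat.sub_le r 1) j ∈ B} : Finset _), Finset.ext fun i => ?_⟩
    simp only [lowerIndexSet, Finset.mem_map, Finset.mem_filter, Finset.mem_univ, true_and,
      Fin.castLEEmb_apply]
    refine ⟨fun ⟨j, hj, hji⟩ => hji ▸ hj, fun hi => ⟨⟨i, hB i hi⟩, hi, rfl⟩⟩
  by_cases hA : ∀ i ∈ A, (i : ℕ) < r - 1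
  · exact (lower A hA).imp fun _ => .inl
  · obtain ⟨i₀, hi₀, hi₀r⟩ := not_forall₂.1 hA
    refine (lower Aᶜ fun i hi => ?_).imp fun _ => .inr
    have : i ≠ i₀ := fun h => Finset.mem_compl.1 hi (h ▸ hi₀)
    have := Fin.val_ne_of_ne this
    omega

variable (x : Fin r ↪ VH)

def boundaryCuts (A : Finset (Fin r)) : Set (Set VH) :=
  {Z | (∀ i, x i ∈ Z ↔ i ∈ A) ∧ (Z \ Set.range x).Nonempty ∧ (Zᶜ \ Set.range x).Nonempty}

variable {x} in
theorem compl_mem_boundaryCuts {A : Finset (Fin r)} {Z : Set VH} (h : Z ∈ boundaryCuts x A) :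
    Zᶜ ∈ boundaryCuts x Aᶜ :=
  ⟨fun i => by simp [h.1 i], h.2.2, by rw [compl_compl]; exact h.2.1⟩

variable [Fintype VH] (H : SimpleGraph VH) (wH : Sym2 VH → ℕ)

noncomputable def minCut (A : Finset (Fin r)) : Set VH :=
  Classical.epsilon fun Z => Z ∈ boundaryCuts x A ∧
    ∀ Z' ∈ boundaryCuts x A, cutSum (H.arcWeight wH) Z ≤ cutSum (H.arcWeight wH) Z'

theorem minCut_spec {A : Finset (Fin r)} (h : (boundaryCuts x A).Nonempty) :
    minCut x H wH A ∈ boundaryCuts x A ∧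
      ∀ Z' ∈ boundaryCuts x A, cutSum (H.arcWeight wH) (minCut x H wH A) ≤
        cutSum (H.arcWeight wH) Z' :=
  Classical.epsilon_spec (Set.exists_min_image _ _ (Set.toFinite _) h)

noncomputable def cutKey (v : VH) : Fin r ⊕ Set (Finset (Fin (r - 1))) :=
  if h : v ∈ Set.range x then .inl (x.invOfMemRange ⟨v, h⟩)
  else .inr {c | v ∈ minCut x H wH (lowerIndexSet c)}

variable {x H wH}

theorem eq_of_cutKey_eq_boundary {v : VH} {i : Fin r}
    (h : cutKey x H wH v = cutKey x H wH (x i)) : v = x i := by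
  rw [cutKey, cutKey, dif_pos (Set.mem_range_self i), x.right_inv_of_invOfMemRange] at h
  split_ifs at h with hv
  obtain ⟨j, rfl⟩ := hv
  rw [x.right_inv_of_invOfMemRange, Sum.inl.injEq] at h
  rw [h]

theorem cutKey_eq_interior {u v : VH} (hu : u ∉ Set.range x) (hv : v ∉ Set.range x)
    (h : cutKey x H wH u = cutKey x H wH v) (c : Finset (Fin (r - 1))) :
    u ∈ minCut x H wH (lowerIndexSet c) ↔ v ∈ minCut x H wH (lowerIndexSet c) := by
  rw [cutKey, cutKey, dif_neg hu, dif_neg hv, Sum.inr.injEq, Set.ext_iff] at h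
  exact h c

theorem mem_iff_mem_of_cutKey_eq {Z : Set VH}
    (hZ : ∀ u v, u ∉ Set.range x → v ∉ Set.range x → cutKey x H wH u = cutKey x H wH v →
      (u ∈ Z ↔ v ∈ Z))
    {u v : VH} (h : cutKey x H wH u = cutKey x H wH v) : u ∈ Z ↔ v ∈ Z := by
  rcases em (u ∈ Set.range x) with ⟨i, rfl⟩ | hu
  · rw [eq_of_cutKey_eq_boundary h.symm]
  rcases em (v ∈ Set.range x) with ⟨j, rfl⟩ | hv
  · rw [eq_of_cutKey_eq_boundary h]
  exact hZ u v hu hv h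

/-- Take a minimum cut of the class of `Z`, or the complement of one for the complementary class;
if `Z` does not split the interior, `Z` itself will do. -/
theorem exists_cutKey_saturated_cut_le (Z : Set VH) :
    ∃ Z' : Set VH, (∀ u v, cutKey x H wH u = cutKey x H wH v → (u ∈ Z' ↔ v ∈ Z')) ∧
      (∀ i, x i ∈ Z' ↔ x i ∈ Z) ∧ cutSum (H.arcWeight wH) Z' ≤ cutSum (H.arcWeight wH) Z ∧
      ((Z \ Set.range x).Nonempty → (Z' \ Set.range x).Nonempty) ∧
      ((Zᶜ \ Set.range x).Nonempty → (Z'ᶜ \ Set.range x).Nonempty) := by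
  by_cases hZ : (Z \ Set.range x).Nonempty ∧ (Zᶜ \ Set.range x).Nonempty
  swap
  · refine ⟨Z, fun _ _ => mem_iff_mem_of_cutKey_eq fun u v hu hv _ =>
      ⟨fun huZ => ?_, fun hvZ => ?_⟩, fun _ => .rfl, le_rfl, id, id⟩
    · by_contra hvZ
      exact hZ ⟨⟨u, huZ, hu⟩, ⟨v, hvZ, hv⟩⟩
    · by_contra huZ
      exact hZ ⟨⟨v, hvZ, hv⟩, ⟨u, huZ, hu⟩⟩
  have hZA : Z ∈ boundaryCuts x {i | x i ∈ Z} := ⟨fun i => by simp, hZ⟩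
  obtain ⟨c, hc | hc⟩ := exists_lowerIndexSet_eq_or_compl ({i | x i ∈ Z} : Finset (Fin r))
  · rw [← hc] at hZA
    obtain ⟨⟨htrace, hin, hout⟩, hmin⟩ := minCut_spec x H wH ⟨Z, hZA⟩
    refine ⟨_, fun _ _ => mem_iff_mem_of_cutKey_eq fun u v hu hv h => cutKey_eq_interior hu hv h c,
      fun i => (htrace i).trans (hZA.1 i).symm, hmin Z hZA, fun _ => hin, fun _ => hout⟩
  · have hZA' := compl_mem_boundaryCuts hZA
    rw [← hc] at hZA'
    obtain ⟨⟨htrace, hin, hout⟩, hmin⟩ := minCut_spec x H wH ⟨Zᶜ, hZA'⟩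
    refine ⟨(minCut x H wH (lowerIndexSet c))ᶜ,
      fun _ _ => mem_iff_mem_of_cutKey_eq fun u v hu hv h =>
        not_congr (cutKey_eq_interior hu hv h c),
      fun i => ((htrace i).trans (hZA'.1 i).symm).not_left, ?_,
      fun _ => hout, fun _ => by rwa [compl_compl]⟩
    rw [cutSum_compl (H.arcWeight_comm wH), ← cutSum_compl (H.arcWeight_comm wH) Z]
    exact hmin _ hZA'

variable (x H wH)

noncomputable def compressSize : ℕ := Fintype.card (Set.range (cutKey x H wH))

noncomputable def compress (v : VH) : Fin (compressSize x H wH) :=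
  Fintype.equivFin _ (Set.rangeFactorization (cutKey x H wH) v)

variable {x H wH}

theorem compress_eq_compress_iff {u v : VH} :
    compress x H wH u = compress x H wH v ↔ cutKey x H wH u = cutKey x H wH v :=
  (Equiv.apply_eq_iff_eq _).trans Subtype.ext_iff

theorem compress_surjective : Function.Surjective (compress x H wH) :=
  (Fintype.equivFin _).surjective.comp Set.rangeFactorization_surjective

theorem compressSize_le : compressSize x H wH ≤ 2 ^ 2 ^ (r - 1) + r :=
  calc compressSize x H wH ≤ Fintype.card (Fin r ⊕ Set (Finset (Fin (r - 1)))) :=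
        set_fintype_card_le_univ _
    _ = 2 ^ 2 ^ (r - 1) + r := by
        rw [Fintype.card_sum, Fintype.card_set, Fintype.card_finset, Fintype.card_fin,
          Fintype.card_fin, add_comm]

end Compression

section CompressedGraph

variable {r : ℕ} {VH : Type*} [Fintype VH] {x : Fin r ↪ VH} {H : SimpleGraph VH}
  {wH : Sym2 VH → ℕ}

variable (x H wH) in
noncomputable def compressBoundary : Fin r ↪ Fin (compressSize x H wH) :=
  ⟨compress x H wH ∘ x, fun _ _ h =>
    x.injective (eq_of_cutKey_eq_boundary (compress_eq_compress_iff.1 h))⟩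

theorem compress_eq_compressBoundary_iff {v : VH} {i : Fin r} :
    compress x H wH v = compressBoundary x H wH i ↔ v = x i :=
  ⟨fun h => eq_of_cutKey_eq_boundary (compress_eq_compress_iff.1 h), fun h => h ▸ rfl⟩

theorem cutsDominatedBy_compress :
    CutsDominatedBy H wH x (quotientGraph H (compress x H wH))
      (quotientWeight H wH (compress x H wH)) (compressBoundary x H wH) := by
  intro Z
  obtain ⟨Z', hsat, htrace, hle, hin, hout⟩ := exists_cutKey_saturated_cut_le (H := H) (wH := wH) Z
  have hZ' : compress x H wH ⁻¹' (compress x H wH '' Z') = Z' := by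
    refine (Set.subset_preimage_image _ _).antisymm' ?_
    rintro v ⟨u, hu, huv⟩
    exact (hsat u v (compress_eq_compress_iff.1 huv)).1 hu
  have interior : ∀ S : Set VH, (S \ Set.range x).Nonempty →
      (compress x H wH '' S \ Set.range (compressBoundary x H wH)).Nonempty := by
    rintro S ⟨v, hv, hvx⟩
    exact ⟨_, ⟨v, hv, rfl⟩, fun ⟨i, hi⟩ =>
      hvx ⟨i, (compress_eq_compressBoundary_iff.1 hi.symm).symm⟩⟩
  have image_compl : compress x H wH '' Z'ᶜ ⊆ (compress x H wH '' Z')ᶜ := by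
    rintro _ ⟨v, hv, rfl⟩ hmem
    exact hv (hZ' ▸ hmem)
  refine ⟨compress x H wH '' Z', fun i => ?_, ?_, fun h => interior Z' (hin h),
    fun h => (interior Z'ᶜ (hout h)).mono (Set.sdiff_subset_sdiff_left image_compl)⟩
  · change compress x H wH (x i) ∈ _ ↔ _
    rw [← Set.mem_preimage, hZ', htrace]
  · rw [cutSum_quotientGraph, hZ']
    exact hle

end CompressedGraph

theorem stmt_6_general {r p : ℕ} {VH : Type*} [Fintype VH]
    (H : SimpleGraph VH) (wH : Sym2 VH → ℕ) (hwH : ∀ e ∈ H.edgeSet, 0 < wH e)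
    (x : Fin r ↪ VH) (hx : ProperB H x) :
    ∃ (n : ℕ) (H' : SimpleGraph (Fin n)) (w' : Sym2 (Fin n) → ℕ) (x' : Fin r ↪ Fin n),
      n ≤ 2 ^ 2 ^ (r - 1) + r ∧ ProperB H' x' ∧ (∀ e ∈ H'.edgeSet, 0 < w' e) ∧
      ∀ (VF : Type*) [Fintype VF] (F : SimpleGraph VF) (wF : Sym2 VF → ℕ),
        (∀ e ∈ F.edgeSet, 0 < wF e) → ∀ y : Fin r ↪ VF,
        (BSum F ⇑y H ⇑x).Connected →
        weightConn (BSum F ⇑y H ⇑x) (BSumW wF wH ⇑y ⇑x) ≤ (p : ℕ∞) →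
        (BSum F ⇑y H' ⇑x').Connected ∧
        weightConn (BSum F ⇑y H' ⇑x') (BSumW wF w' ⇑y ⇑x') =
          weightConn (BSum F ⇑y H ⇑x) (BSumW wF wH ⇑y ⇑x) := by
  have hx' : ∀ v i, compress x H wH v = compressBoundary x H wH i ↔ v = x i :=
    fun _ _ => compress_eq_compressBoundary_iff
  have hproper := properB_quotientGraph H _ compress_surjective hx' hx
  refine ⟨compressSize x H wH, quotientGraph H (compress x H wH),
    quotientWeight H wH (compress x H wH), compressBoundary x H wH, compressSize_le, hproper,
    quotientWeight_pos H wH _ hwH, ?_⟩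
  intro VF _ F wF hwF y hconn _
  -- `convert`: on `Fin n` the `Fintype` instance of the boundary sum uses `instDecidableEqFin`
  -- rather than the classical one in the general lemma.
  convert bsum_connected_and_weightConn_eq cutsDominatedBy_compress
    (quotientGraph_cutsDominatedBy H wH _ compress_surjective hx') hx.1 hproper.1 hwF hwH hconn
    using 3

/-- Let `(H,x)` be a properly `r`-boundaried weighted graph and `p` a positive integer.
Then there is a properly `r`-boundaried weighted graph `(H',x')` with at most
`2^{2^{r-1}} + r` vertices such that for every `r`-boundaried weighted graph `(F,y)`:
if `G = (F,y) ⊕_b (H,x)` is connected and `λ(G) ≤ p`, then `(F,y) ⊕_b (H',x')` is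
connected and `λ((F,y) ⊕_b (H',x')) = λ(G)`. -/
theorem stmt_6 {r p : ℕ} (hp : 0 < p) {VH : Type*} [Fintype VH]
    (H : SimpleGraph VH) (wH : Sym2 VH → ℕ) (hwH : ∀ e ∈ H.edgeSet, 0 < wH e)
    (x : Fin r ↪ VH) (hx : ProperB H x) :
    ∃ (n : ℕ) (H' : SimpleGraph (Fin n)) (w' : Sym2 (Fin n) → ℕ) (x' : Fin r ↪ Fin n),
      n ≤ 2 ^ 2 ^ (r - 1) + r ∧ ProperB H' x' ∧ (∀ e ∈ H'.edgeSet, 0 < w' e) ∧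
      ∀ (VF : Type*) [Fintype VF] (F : SimpleGraph VF) (wF : Sym2 VF → ℕ),
        (∀ e ∈ F.edgeSet, 0 < wF e) → ∀ y : Fin r ↪ VF,
        (BSum F ⇑y H ⇑x).Connected →
        weightConn (BSum F ⇑y H ⇑x) (BSumW wF wH ⇑y ⇑x) ≤ (p : ℕ∞) →
        (BSum F ⇑y H' ⇑x').Connected ∧
        weightConn (BSum F ⇑y H' ⇑x') (BSumW wF w' ⇑y ⇑x') =
          weightConn (BSum F ⇑y H ⇑x) (BSumW wF wH ⇑y ⇑x) :=
  stmt_6_general H wH hwH x hx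
end

section
/- Let G be a weighted graph, let k be a nonnegative integer, and let F ⊆ E(G) with w(F) ≤ k. Then: (a) any two vertices u, v with λ_G(u,v) ≥ k+1 lie in the same connected component of G−F; and (b) if C is a connected component of G−F whose weighted connectivity satisfies λ(C) ≥ k+1, then V(C) is exactly one equivalence class of the relation on V(G) defined by u ∼ v if and only if λ_G(u,v) ≥ k+1. -/
open scoped Classical

/-- The weighted connectivity of the subgraph of `(G,w)` induced by the vertex set `C`. -/
noncomputable def compConn {V : Type*} [Fintype V] (G : SimpleGraph V) (w : Sym2 V → ℕ)
    (C : Set V) : ℕ∞ :=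
  weightConn (G.induce C) (fun e => w (Sym2.map Subtype.val e))

/-- `λ_G(u,v)`: the minimum total weight of a `(u,v)`-separator, i.e. of an edge set `S`
such that `G - S` has no path from `u` to `v`; it equals `+∞` when `u = v`. -/
noncomputable def lamP {V : Type*} [Fintype V] (G : SimpleGraph V) (w : Sym2 V → ℕ)
    (u v : V) : ℕ∞ :=
  sInf {c : ℕ∞ | ∃ S : Finset (Sym2 V), ↑S ⊆ G.edgeSet ∧ (∑ e ∈ S, (w e : ℕ∞)) = c ∧
    ¬ (G.deleteEdges ↑S).Reachable u v}

/-- Let `G` be a weighted graph, `k` a nonnegative integer, and `F ⊆ E(G)` with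
`w(F) ≤ k`. Then (a) any two vertices `u,v` with `λ_G(u,v) ≥ k+1` lie in the same
connected component of `G - F`; and (b) if `C` is a connected component of `G - F` with
`λ(C) ≥ k+1`, then `V(C)` is exactly an equivalence class of the relation
`u ∼ v ↔ λ_G(u,v) ≥ k+1`. -/
theorem stmt_11 {V : Type*} [Fintype V] (G : SimpleGraph V) (w : Sym2 V → ℕ)
    (hw : ∀ e ∈ G.edgeSet, 0 < w e) (k : ℕ)
    (F : Finset (Sym2 V)) (hF : ↑F ⊆ G.edgeSet) (hwF : (∑ e ∈ F, w e) ≤ k) :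
    (∀ u v : V, ((k + 1 : ℕ) : ℕ∞) ≤ lamP G w u v → (G.deleteEdges ↑F).Reachable u v) ∧
    (∀ c : (G.deleteEdges ↑F).ConnectedComponent,
      ((k + 1 : ℕ) : ℕ∞) ≤ compConn (G.deleteEdges ↑F) w c.supp →
      ∀ u ∈ c.supp, c.supp = {v : V | ((k + 1 : ℕ) : ℕ∞) ≤ lamP G w u v}) := by
  have hsumF : (∑ e ∈ F, (w e : ℕ∞)) ≤ (k : ℕ∞) := by
    rw [← Nat.cast_sum]
    exact_mod_cast hwF
  have parta : ∀ u v : V, ((k + 1 : ℕ) : ℕ∞) ≤ lamP G w u v →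
      (G.deleteEdges ↑F).Reachable u v := by
    intro u v h
    by_contra hr
    have hmem : (∑ e ∈ F, (w e : ℕ∞)) ∈ {c : ℕ∞ | ∃ S : Finset (Sym2 V),
        ↑S ⊆ G.edgeSet ∧ (∑ e ∈ S, (w e : ℕ∞)) = c ∧
        ¬ (G.deleteEdges ↑S).Reachable u v} := ⟨F, hF, rfl, hr⟩
    have hle : ((k + 1 : ℕ) : ℕ∞) ≤ (k : ℕ∞) :=
      le_trans (h.trans (sInf_le hmem)) hsumF
    exact absurd (Nat.cast_le.mp hle) (by omega)
  refine ⟨parta, ?_⟩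
  intro c hcc u hu
  ext v
  simp only [Set.mem_setOf_eq]
  constructor
  · intro hv
    refine le_sInf ?_
    rintro x ⟨S, hS, rfl, hnr⟩
    by_contra hx
    push_neg at hx
    set C : Set V := c.supp with hC
    haveI : Fintype ↥C := Fintype.ofFinite _
    set H : SimpleGraph ↥C := (G.deleteEdges ↑F).induce C with hH
    -- the defining set of weightConn is downward closed, so `k+1` belongs to it
    have hdc : ∀ S' : Finset (Sym2 ↥C), ↑S' ⊆ H.edgeSet →
        (∑ e ∈ S', ((w (Sym2.map Subtype.val e)) : ℕ∞)) < ((k + 1 : ℕ) : ℕ∞) →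
        (H.deleteEdges ↑S').Connected := by
      by_contra hP
      set P : Set ℕ∞ := {k' : ℕ∞ | ∀ S' : Finset (Sym2 ↥C), ↑S' ⊆ H.edgeSet →
        (∑ e ∈ S', ((w (Sym2.map Subtype.val e)) : ℕ∞)) < k' →
        (H.deleteEdges ↑S').Connected} with hPdef
    -- every element of P is ≤ k
      have hPle : ∀ x ∈ P, x ≤ (k : ℕ∞) := by
        intro x hxP
        by_contra hxk
        push_neg at hxk
        have hk1 : ((k + 1 : ℕ) : ℕ∞) ≤ x := by
          have : (k : ℕ∞) + 1 ≤ x := (ENat.add_one_le_iff (by simp)).mpr hxk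
          simpa [Nat.cast_add, Nat.cast_one] using this
        exact hP (fun S' hS' hlt => hxP S' hS' (lt_of_lt_of_le hlt hk1))
      have hsup : sSup P ≤ (k : ℕ∞) := sSup_le hPle
      have hle : ((k + 1 : ℕ) : ℕ∞) ≤ (k : ℕ∞) := le_trans hcc hsup
      exact absurd (Nat.cast_le.mp hle) (by omega)
    -- build the finset of edges of H hit by S
    set S' : Finset (Sym2 ↥C) := Finset.univ.filter
      (fun e => Sym2.map Subtype.val e ∈ S ∧ e ∈ H.edgeSet) with hS'def
    have hS'sub : ↑S' ⊆ H.edgeSet := by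
      intro e he
      simp only [hS'def, Finset.coe_filter, Set.mem_setOf_eq] at he
      exact he.2.2
    have hinj : Function.Injective (Sym2.map (Subtype.val : ↥C → V)) :=
      Sym2.map.injective Subtype.val_injective
    have hsum : (∑ e ∈ S', ((w (Sym2.map Subtype.val e)) : ℕ∞)) < ((k + 1 : ℕ) : ℕ∞) := by
      have h1 : (∑ e ∈ S', ((w (Sym2.map Subtype.val e)) : ℕ∞))
          = ∑ e ∈ S'.image (Sym2.map Subtype.val), (w e : ℕ∞) :=
        by rw [Finset.sum_image (fun a _ b _ h => hinj h)]
      have h2 : S'.image (Sym2.map Subtype.val) ⊆ S := by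
        intro e he
        simp only [Finset.mem_image] at he
        obtain ⟨a, ha, rfl⟩ := he
        simp only [hS'def, Finset.mem_filter] at ha
        exact ha.2.1
      calc (∑ e ∈ S', ((w (Sym2.map Subtype.val e)) : ℕ∞))
          = ∑ e ∈ S'.image (Sym2.map Subtype.val), (w e : ℕ∞) := h1
        _ ≤ ∑ e ∈ S, (w e : ℕ∞) :=
            Finset.sum_le_sum_of_subset h2
        _ < ((k + 1 : ℕ) : ℕ∞) := hx
    have hconn : (H.deleteEdges ↑S').Connected := hdc S' hS'sub hsum
    -- map reachability from the induced graph back to G - S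
    have huC : u ∈ C := hu
    have hvC : v ∈ C := hv
    have hreach : (H.deleteEdges ↑S').Reachable ⟨u, huC⟩ ⟨v, hvC⟩ :=
      hconn.preconnected _ _
    have fadj : ∀ a b : ↥C, (H.deleteEdges ↑S').Adj a b →
        (G.deleteEdges ↑S).Adj a.val b.val := by
      intro a b hab
      rw [SimpleGraph.deleteEdges_adj] at hab
      obtain ⟨habH, habS'⟩ := hab
      have hGadj : G.Adj a.val b.val := by
        have : (G.deleteEdges ↑F).Adj a.val b.val := habH
        exact this.1
      rw [SimpleGraph.deleteEdges_adj]
      refine ⟨hGadj, ?_⟩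
      intro hmemS
      apply habS'
      have : s(a, b) ∈ S' := by
        simp only [hS'def, Finset.mem_filter, Finset.mem_univ, true_and]
        exact ⟨hmemS, habH⟩
      exact_mod_cast this
    let f : (H.deleteEdges ↑S') →g (G.deleteEdges ↑S) :=
      ⟨Subtype.val, fun {a b} hab => fadj a b hab⟩
    exact hnr (hreach.map f)
  · intro hv
    have hr := parta u v hv
    rw [SimpleGraph.ConnectedComponent.mem_supp_iff] at hu ⊢
    exact (SimpleGraph.ConnectedComponent.sound hr.symm).trans hu
end

section
/- Let k be a positive integer and let G be a weighted graph in which every connected component C satisfies λ(C) ≤ k. Then for every F ⊆ E(G) with w(F) ≤ k, the graph G−F has at most 2k connected components C' with λ(C') ≥ k+1. -/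
open scoped Classical

section
variable {V : Type*} [Fintype V]

/-- If a component of `G.deleteEdges F` contains no endpoint of an edge of `F`, then its
support is the support of a `G`-component, and the induced graphs coincide. -/
lemma aux_supp_eq (G : SimpleGraph V) (F : Finset (Sym2 V))
    (c : (G.deleteEdges ↑F).ConnectedComponent)
    (hno : ∀ v ∈ c.supp, ∀ e ∈ F, v ∉ e) :
    ∃ c' : G.ConnectedComponent, c.supp = c'.supp ∧
      (G.deleteEdges ↑F).induce c.supp = G.induce c.supp := by
  classical
  have adj_iff : ∀ v ∈ c.supp, ∀ u, (G.deleteEdges ↑F).Adj v u ↔ G.Adj v u := by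
    intro v hv u
    constructor
    · exact fun h => h.1
    · intro h
      refine SimpleGraph.deleteEdges_adj.2 ⟨h, ?_⟩
      intro hmem
      exact hno v hv _ (Finset.mem_coe.1 hmem) (Sym2.mem_mk_left v u)
  obtain ⟨v₀, hv₀⟩ := Quot.exists_rep c
  have hv₀c : v₀ ∈ c.supp := by
    simp [SimpleGraph.ConnectedComponent.mem_supp_iff, ← hv₀]
    rfl
  refine ⟨G.connectedComponentMk v₀, ?_, ?_⟩
  · apply Set.Subset.antisymm
    · intro u hu
      rw [SimpleGraph.ConnectedComponent.mem_supp_iff] at hu ⊢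
      rw [← hv₀] at hu
      exact SimpleGraph.ConnectedComponent.sound
        ((SimpleGraph.ConnectedComponent.exact hu).mono (G.deleteEdges_le _))
    · intro u hu
      rw [SimpleGraph.ConnectedComponent.mem_supp_iff] at hu
      have hreach : G.Reachable v₀ u :=
        (SimpleGraph.ConnectedComponent.exact hu).symm
      obtain ⟨p⟩ := hreach
      -- walk induction: any G-walk starting in c.supp stays in c.supp
      have main : ∀ a u : V, (p : G.Walk a u) → a ∈ c.supp → u ∈ c.supp := by
        intro a u p
        induction p with
        | nil => exact fun h => h
        | cons h p ih =>
          intro ha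
          apply ih
          have hadj : (G.deleteEdges ↑F).Adj _ _ := (adj_iff _ ha _).2 h
          rw [SimpleGraph.ConnectedComponent.mem_supp_iff] at ha ⊢
          rw [← ha]
          exact (SimpleGraph.ConnectedComponent.sound hadj.reachable).symm
      exact main _ _ p hv₀c
  · ext ⟨x, hx⟩ ⟨y, hy⟩
    simp only [SimpleGraph.comap_adj, Function.Embedding.coe_subtype]
    exact adj_iff x hx y

end

/-- Let `k` be a positive integer and `G` a weighted graph all of whose connected
components `C` satisfy `λ(C) ≤ k`. Then for every `F ⊆ E(G)` with `w(F) ≤ k` the graph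
`G - F` has at most `2k` connected components `C'` with `λ(C') ≥ k+1`. -/
theorem stmt_15 {V : Type*} [Fintype V] (G : SimpleGraph V) (w : Sym2 V → ℕ)
    (hw : ∀ e ∈ G.edgeSet, 0 < w e) (k : ℕ) (hk : 0 < k)
    (hcomp : ∀ c : G.ConnectedComponent, compConn G w c.supp ≤ (k : ℕ∞)) :
    ∀ F : Finset (Sym2 V), ↑F ⊆ G.edgeSet → (∑ e ∈ F, w e) ≤ k →
      Nat.card {c : (G.deleteEdges ↑F).ConnectedComponent //
        ((k + 1 : ℕ) : ℕ∞) ≤ compConn (G.deleteEdges ↑F) w c.supp} ≤ 2 * k := by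
  classical
  intro F hF hwF
  -- every "good" component contains an endpoint of an edge of F
  have key : ∀ c : (G.deleteEdges ↑F).ConnectedComponent,
      ((k + 1 : ℕ) : ℕ∞) ≤ compConn (G.deleteEdges ↑F) w c.supp →
      ∃ v ∈ c.supp, ∃ e ∈ F, v ∈ e := by
    intro c hc
    by_contra hno
    push_neg at hno
    obtain ⟨c', hsupp, hind⟩ := aux_supp_eq G F c (fun v hv e he hm => hno v hv e he hm)
    have : compConn (G.deleteEdges ↑F) w c.supp = compConn G w c'.supp := by
      rw [← hsupp]
      unfold compConn
      rw [hind]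
    have hle : ((k + 1 : ℕ) : ℕ∞) ≤ (k : ℕ∞) := hc.trans (this ▸ hcomp c')
    rw [Nat.cast_le] at hle
    omega
  -- the set of endpoints of edges of F
  set T : Finset V := F.biUnion (fun e => Finset.univ.filter (fun v => v ∈ e)) with hT
  have hTcard : T.card ≤ 2 * F.card := by
    calc T.card ≤ ∑ e ∈ F, (Finset.univ.filter (fun v => v ∈ e)).card :=
          Finset.card_biUnion_le
      _ ≤ ∑ e ∈ F, 2 := by
          refine Finset.sum_le_sum fun e _ => ?_
          induction e with
          | h a b =>
            refine le_trans (Finset.card_le_card (t := ({a, b} : Finset V)) fun v hv => ?_) ?_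
            · simp only [Finset.mem_filter, Finset.mem_univ, true_and, Sym2.mem_iff] at hv
              simp [hv]
            · exact (Finset.card_insert_le a {b}).trans (by simp)
      _ = 2 * F.card := by rw [Finset.sum_const, smul_eq_mul, mul_comm]
  have hFk : F.card ≤ k := by
    calc F.card = ∑ _e ∈ F, 1 := by simp
      _ ≤ ∑ e ∈ F, w e := Finset.sum_le_sum fun e he => hw e (hF he)
      _ ≤ k := hwF
  -- injection from good components into T
  set P : (G.deleteEdges ↑F).ConnectedComponent → Prop :=
    fun c => ((k + 1 : ℕ) : ℕ∞) ≤ compConn (G.deleteEdges ↑F) w c.supp with hP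
  have : Nat.card {c // P c} ≤ T.card := by
    have hf : ∀ c : {c // P c}, ∃ v, v ∈ c.1.supp ∧ v ∈ T := by
      rintro ⟨c, hc⟩
      obtain ⟨v, hv, e, he, hve⟩ := key c hc
      exact ⟨v, hv, by simp [hT, Finset.mem_biUnion]; exact ⟨e, he, hve⟩⟩
    choose f hf1 hf2 using hf
    have hinj : Function.Injective (fun c : {c // P c} => (⟨f c, hf2 c⟩ : {v // v ∈ T})) := by
      intro c₁ c₂ h
      simp only [Subtype.mk.injEq] at h
      have h1 := hf1 c₁
      have h2 := hf1 c₂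
      rw [SimpleGraph.ConnectedComponent.mem_supp_iff] at h1 h2
      exact Subtype.ext (h1 ▸ h2 ▸ congrArg _ h)
    calc Nat.card {c // P c} ≤ Nat.card {v // v ∈ T} := Nat.card_le_card_of_injective _ hinj
      _ = T.card := by rw [Nat.card_eq_fintype_card, Fintype.card_coe]
  exact this.trans (hTcard.trans (by omega))
end

section
/- Let k be a positive integer, let G be a weighted graph in which every connected component C satisfies λ(C) ≤ k, and let Λ = ⟨λ_1,…,λ_t⟩ be a nondecreasing tuple with entries in ℕ∪{+∞} at least 2k+1 of which are strictly greater than k. Then (G,w,Λ,k) is a no-instance of CGWC, i.e., there is no F ⊆ E(G) with w(F) ≤ k such that G−F has exactly t connected components G_1,…,G_t with λ(G_i) ≥ λ_i for every i. -/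
open scoped Classical

/-- The multiset of the weighted connectivities of the connected components of `(G,w)`. -/
noncomputable def connMultiset {V : Type*} [Fintype V] (G : SimpleGraph V)
    (w : Sym2 V → ℕ) : Multiset ℕ∞ :=
  (@Finset.univ G.ConnectedComponent (Fintype.ofFinite _)).val.map
    (fun c => compConn G w c.supp)

/-- `α ⪯ β` for multisets viewed as nondecreasing tuples: the tuples have the same length
and the `i`-th smallest entry of `α` is at most the `i`-th smallest entry of `β`. -/
def DomLE (α β : Multiset ℕ∞) : Prop :=
  List.Forall₂ (· ≤ ·) (α.sort (· ≤ ·)) (β.sort (· ≤ ·))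

/-- `(G,w,Λ,k)` is a yes-instance of CGWC: there is `F ⊆ E(G)` with `w(F) ≤ k` such that
`G - F` has exactly `Λ.card` connected components `G_1,…,G_t` with `λ(G_i) ≥ λ_i`
(where `Λ = ⟨λ_1 ≤ … ≤ λ_t⟩`). -/
def IsYes {V : Type*} [Fintype V] (G : SimpleGraph V) (w : Sym2 V → ℕ)
    (Λ : Multiset ℕ∞) (k : ℕ) : Prop :=
  ∃ F : Finset (Sym2 V), ↑F ⊆ G.edgeSet ∧ (∑ e ∈ F, w e) ≤ k ∧
    DomLE Λ (connMultiset (G.deleteEdges ↑F) w)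


/-! If `F` witnessed a yes-instance, every component of `G - F` with connectivity above `k`
would contain an endpoint of an edge of `F`: a component avoiding all of them is a whole
component of `G`, with the same induced weights, hence of connectivity at most `k`. Positive
weights give `|F| ≤ w(F) ≤ k`, so these endpoints meet at most `2k` components, whereas the
domination `Λ ⪯ λ(G - F)` forces at least `2k+1` components of connectivity above `k`. -/

theorem List.Forall₂.countP_le {α β : Type*} {R : α → β → Prop} {p : α → Bool} {q : β → Bool}
    (hpq : ∀ a b, R a b → p a → q b) {l₁ : List α} {l₂ : List β} (h : List.Forall₂ R l₁ l₂) :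
    l₁.countP p ≤ l₂.countP q := by
  induction h with
  | nil => simp
  | @cons a b _ _ hab _ ih =>
    simp only [List.countP_cons]
    by_cases ha : p a
    · rw [if_pos ha, if_pos (hpq a b hab ha)]
      omega
    · rw [if_neg ha]
      split_ifs <;> omega

theorem DomLE.card_filter_lt_le {α β : Multiset ℕ∞} (h : DomLE α β) (a : ℕ∞) :
    (α.filter (a < ·)).card ≤ (β.filter (a < ·)).card := by
  rw [← Multiset.countP_eq_card_filter, ← Multiset.countP_eq_card_filter,
    ← Multiset.sort_eq α (· ≤ ·), ← Multiset.sort_eq β (· ≤ ·),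
    Multiset.coe_countP, Multiset.coe_countP]
  exact h.countP_le fun _ _ hab hlt => by simpa using (of_decide_eq_true hlt).trans_le hab

theorem card_filter_connMultiset {V : Type*} [Fintype V] (G : SimpleGraph V) (w : Sym2 V → ℕ)
    (p : ℕ∞ → Prop) [DecidablePred p] :
    ((connMultiset G w).filter p).card =
      {c : G.ConnectedComponent | p (compConn G w c.supp)}.ncard := by
  rw [connMultiset, Multiset.filter_map, Multiset.card_map, ← Finset.filter_val,
    Finset.card_val, ← Set.ncard_coe_finset, Finset.coe_filter]
  simp

namespace SimpleGraph

variable {V : Type*} {G : SimpleGraph V} {s : Set (Sym2 V)}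

theorem induce_deleteEdges_of_forall_notMem {S : Set V} (hS : ∀ e ∈ s, ∀ x ∈ e, x ∉ S) :
    (G.deleteEdges s).induce S = G.induce S := by
  ext ⟨x, hx⟩ ⟨y, _⟩
  simp only [comap_adj, Function.Embedding.coe_subtype, deleteEdges_adj, and_iff_left_iff_imp]
  exact fun _ he => hS _ he x (Sym2.mem_mk_left x y) hx

theorem ConnectedComponent.supp_eq_supp_connectedComponentMk_of_forall_notMem
    (c : (G.deleteEdges s).ConnectedComponent) (hc : ∀ e ∈ s, ∀ x ∈ e, x ∉ c.supp)
    {v : V} (hv : v ∈ c.supp) : c.supp = (G.connectedComponentMk v).supp := by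
  refine subset_antisymm ?_ fun u hu => ?_
  · rw [← (c.mem_supp_iff v).mp hv]
    exact connectedComponentMk_supp_subset_supp (deleteEdges_le s) _ rfl
  have hclosed : ∀ x y, x ∈ c.supp → G.Adj x y → y ∈ c.supp := fun x y hx hxy =>
    c.mem_supp_of_adj_mem_supp hx <|
      (deleteEdges_adj ..).mpr ⟨hxy, fun he => hc _ he x (Sym2.mem_mk_left x y) hx⟩
  have hvu : Relation.ReflTransGen G.Adj v u :=
    (reachable_iff_reflTransGen v u).mp (ConnectedComponent.exact hu).symm
  clear hu
  induction hvu with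
  | refl => exact hv
  | tail _ hxy ih => exact hclosed _ _ ih hxy

theorem exists_compConn_deleteEdges_eq_of_forall_notMem [Fintype V] (w : Sym2 V → ℕ)
    (c : (G.deleteEdges s).ConnectedComponent) (hc : ∀ e ∈ s, ∀ x ∈ e, x ∉ c.supp) :
    ∃ c' : G.ConnectedComponent, compConn (G.deleteEdges s) w c.supp = compConn G w c'.supp := by
  obtain ⟨v, hv⟩ := c.nonempty_supp
  refine ⟨G.connectedComponentMk v, ?_⟩
  rw [compConn, compConn, induce_deleteEdges_of_forall_notMem hc,
    c.supp_eq_supp_connectedComponentMk_of_forall_notMem hc hv]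

theorem ncard_setOf_connectedComponent_meets_le [DecidableEq V] (H : SimpleGraph V)
    (F : Finset (Sym2 V)) :
    {c : H.ConnectedComponent | ∃ e ∈ F, ∃ x ∈ e, x ∈ c.supp}.ncard ≤ 2 * F.card := by
  have hsub : {c : H.ConnectedComponent | ∃ e ∈ F, ∃ x ∈ e, x ∈ c.supp} ⊆
      H.connectedComponentMk '' ↑(F.biUnion Sym2.toFinset) := by
    rintro c ⟨e, he, x, hxe, hxc⟩
    exact ⟨x, by simpa using ⟨e, he, hxe⟩, hxc⟩
  calc _ ≤ (H.connectedComponentMk '' ↑(F.biUnion Sym2.toFinset)).ncard :=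
        Set.ncard_le_ncard hsub (Set.toFinite _)
    _ ≤ (F.biUnion Sym2.toFinset).card :=
        (Set.ncard_image_le (Set.toFinite _)).trans_eq (Set.ncard_coe_finset _)
    _ ≤ ∑ e ∈ F, e.toFinset.card := Finset.card_biUnion_le
    _ ≤ ∑ _e ∈ F, 2 := Finset.sum_le_sum fun e _ => by
        rw [Sym2.card_toFinset]; split_ifs <;> omega
    _ = 2 * F.card := by rw [Finset.sum_const, smul_eq_mul, mul_comm]

end SimpleGraph

theorem stmt_16_general {V : Type*} [Fintype V] (G : SimpleGraph V) (w : Sym2 V → ℕ)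
    (hw : ∀ e ∈ G.edgeSet, 0 < w e) (k : ℕ)
    (hcomp : ∀ c : G.ConnectedComponent, compConn G w c.supp ≤ (k : ℕ∞))
    (Λ : Multiset ℕ∞) (hΛ : 2 * k + 1 ≤ (Λ.filter (fun x => (k : ℕ∞) < x)).card) :
    ¬ IsYes G w Λ k := by
  rintro ⟨F, hFG, hwF, hdom⟩
  set H := G.deleteEdges ↑F
  have hmany : 2 * k + 1 ≤ {c : H.ConnectedComponent | (k : ℕ∞) < compConn H w c.supp}.ncard :=
    hΛ.trans ((hdom.card_filter_lt_le k).trans_eq (card_filter_connMultiset H w _))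
  have hmeets : {c : H.ConnectedComponent | (k : ℕ∞) < compConn H w c.supp} ⊆
      {c | ∃ e ∈ F, ∃ x ∈ e, x ∈ c.supp} := by
    intro c hc
    by_contra huntouched
    simp only [Set.mem_ofPred_eq, not_exists, not_and] at huntouched
    obtain ⟨c', hc'⟩ := SimpleGraph.exists_compConn_deleteEdges_eq_of_forall_notMem w c huntouched
    exact (hc.trans_eq hc').not_ge (hcomp c')
  have hF : F.card ≤ k := calc
    F.card = ∑ _e ∈ F, 1 := by simp
    _ ≤ ∑ e ∈ F, w e := Finset.sum_le_sum fun e he => hw e (hFG he)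
    _ ≤ k := hwF
  have hfew := (Set.ncard_le_ncard hmeets (Set.toFinite _)).trans
    (SimpleGraph.ncard_setOf_connectedComponent_meets_le H F)
  omega

/-- Let `k` be a positive integer and `G` a weighted graph all of whose connected
components have weighted connectivity at most `k`. If at least `2k+1` entries of the
nondecreasing tuple `Λ` are strictly greater than `k`, then `(G,w,Λ,k)` is a no-instance
of CGWC. -/
theorem stmt_16 {V : Type*} [Fintype V] (G : SimpleGraph V) (w : Sym2 V → ℕ)
    (hw : ∀ e ∈ G.edgeSet, 0 < w e) (k : ℕ) (hk : 0 < k)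
    (hcomp : ∀ c : G.ConnectedComponent, compConn G w c.supp ≤ (k : ℕ∞))
    (Λ : Multiset ℕ∞) (hΛ : 2 * k + 1 ≤ (Λ.filter (fun x => (k : ℕ∞) < x)).card) :
    ¬ IsYes G w Λ k :=
  stmt_16_general G w hw k hcomp Λ hΛ
end

section
/- Let G be a weighted graph, let Λ = ⟨λ_1,…,λ_t⟩ be a nondecreasing tuple with entries in ℕ∪{+∞}, and let k be a nonnegative integer. Let C be a connected component of G with λ(C) > k, suppose some entry of Λ is at most λ(C), and let λ_j be the largest such entry. Then (G,w,Λ,k) is a yes-instance of CGWC if and only if (G−V(C), w, Λ', k) is a yes-instance of CGWC, where Λ' is the (t−1)-tuple obtained from Λ by removing the entry λ_j. -/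
open scoped Classical

/-!
Pair the components of `G - F` with the entries of `Λ` (`DomLE` is `Multiset.Rel (· ≤ ·)`).
If `w(F) ≤ k < λ(C)`, then `C - F` is still connected, hence a single component of `G - F`
with connectivity at most `λ(C)`. The entry paired with it is at most `λ(C)`, and an exchange
argument lets `λ_j` take its place, which leaves a pairing of `Λ'` with the components of
`(G - V(C)) - F`. Conversely, a solution for `G - V(C)` leaves `C` untouched, and `C` can take
`λ_j ≤ λ(C)`.
-/

namespace Multiset

variable {α : Type*} {r : α → α → Prop} {s t : Multiset α} {a b : α}

theorem Rel.exists_mem_erase [DecidableEq α] (h : Rel r s t) (ha : a ∈ s) :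
    ∃ b ∈ t, r a b ∧ Rel r (s.erase a) (t.erase b) := by
  rw [← cons_erase ha] at h
  obtain ⟨b, t', hab, hrel, rfl⟩ := rel_cons_left.mp h
  exact ⟨b, mem_cons_self b t', hab, by rwa [erase_cons_head]⟩

theorem Rel.erase_erase [DecidableEq α] [IsTrans α r] (h : Rel r s t) (ha : a ∈ s) (hb : b ∈ t)
    (hmax : ∀ x ∈ s, r x b → r x a) : Rel r (s.erase a) (t.erase b) := by
  rw [← cons_erase hb] at h
  obtain ⟨x, s', hxb, hrel, rfl⟩ := rel_cons_right.mp h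
  by_cases hxa : x = a
  · subst hxa
    rwa [erase_cons_head]
  · have ha' : a ∈ s' := (mem_cons.mp ha).resolve_left (Ne.symm hxa)
    obtain ⟨y, hy, hay, hrel'⟩ := hrel.exists_mem_erase ha'
    rw [erase_cons_tail_of_mem ha', ← cons_erase hy]
    exact hrel'.cons (_root_.trans (hmax x (mem_cons_self x s') hxb) hay)

theorem forall₂_of_rel_of_pairwise [LinearOrder α] :
    ∀ {l₁ l₂ : List α}, l₁.Pairwise (· ≤ ·) → l₂.Pairwise (· ≤ ·) →
      Rel (· ≤ ·) (l₁ : Multiset α) l₂ → List.Forall₂ (· ≤ ·) l₁ l₂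
  | [], l₂, _, _, h => by
    rw [coe_nil, rel_zero_left, coe_eq_zero] at h
    subst h
    exact .nil
  | _ :: _, [], _, _, h => absurd (card_eq_card_of_rel h) (by simp)
  | a :: l₁, b :: l₂, h₁, h₂, h => by
    rw [List.pairwise_cons] at h₁ h₂
    have h' : Rel (· ≥ ·) (b ::ₘ l₂) (a ::ₘ l₁) := rel_flip.mpr h
    obtain ⟨x, hx, hbx, -⟩ := h'.exists_mem_erase (mem_cons_self b _)
    have hab : a ≤ b := by
      rcases mem_cons.mp hx with rfl | hx
      · exact hbx
      · exact (h₁.1 x hx).trans hbx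
    have htail := h'.erase_erase (mem_cons_self b _) (mem_cons_self a _)
      fun x hx _ => (mem_cons.mp hx).elim ge_of_eq fun hx => h₂.1 x hx
    rw [erase_cons_head, erase_cons_head] at htail
    exact .cons hab (forall₂_of_rel_of_pairwise h₁.2 h₂.2 (rel_flip.mpr htail))

theorem rel_coe_of_forall₂ {l₁ l₂ : List α} (h : List.Forall₂ r l₁ l₂) :
    Rel r (l₁ : Multiset α) l₂ := by
  induction h with
  | nil => exact .zero
  | cons hab _ ih => exact .cons hab ih

theorem forall₂_sort_iff_rel [LinearOrder α] :
    List.Forall₂ (· ≤ ·) (s.sort (· ≤ ·)) (t.sort (· ≤ ·)) ↔ Rel (· ≤ ·) s t := by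
  conv_rhs => rw [← sort_eq s (· ≤ ·), ← sort_eq t (· ≤ ·)]
  exact ⟨rel_coe_of_forall₂,
    forall₂_of_rel_of_pairwise (pairwise_sort _ _) (pairwise_sort _ _)⟩

end Multiset

theorem domLE_iff_rel {α β : Multiset ℕ∞} : DomLE α β ↔ Multiset.Rel (· ≤ ·) α β :=
  Multiset.forall₂_sort_iff_rel

namespace SimpleGraph

variable {V W : Type*}

def Iso.deleteEdges {G : SimpleGraph V} {G' : SimpleGraph W} (e : G ≃g G') (s : Set (Sym2 V)) :
    G.deleteEdges s ≃g G'.deleteEdges (Sym2.map e '' s) where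
  toEquiv := e.toEquiv
  map_rel_iff' {a b} := by
    simp [deleteEdges_adj, e.map_adj_iff, ← Sym2.map_mk,
      (Sym2.map.injective e.injective).mem_set_image]

theorem induce_deleteEdges (G : SimpleGraph V) (s : Set (Sym2 V)) (A : Set V) :
    (G.deleteEdges s).induce A = (G.induce A).deleteEdges (Sym2.map Subtype.val ⁻¹' s) := by
  ext x y
  simp

end SimpleGraph

open SimpleGraph

section WeightConn

variable {V W : Type*}

-- `weightConn` ignores its `Fintype` argument; leaving it implicit lets these lemmas match any
-- instance, e.g. the classical one built into `compConn`.
theorem weightConn_le_of_iso {_ : Fintype V} {_ : Fintype W} {G : SimpleGraph V}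
    {G' : SimpleGraph W} {w : Sym2 V → ℕ} {w' : Sym2 W → ℕ} (e : G ≃g G')
    (hw : ∀ z, w (Sym2.map e.symm z) = w' z) :
    weightConn G w ≤ weightConn G' w' := by
  refine sSup_le_sSup fun k hk S' hS' hsum => ?_
  have hS : ↑(S'.image (Sym2.map e.symm)) ⊆ G.edgeSet := by
    rw [Finset.coe_image]
    rintro _ ⟨z, hz, rfl⟩
    exact e.symm.map_mem_edgeSet_iff.mpr (hS' hz)
  have hsum' : ∑ z ∈ S'.image (Sym2.map e.symm), (w z : ℕ∞) < k := by
    rw [Finset.sum_image (Sym2.map.injective e.symm.injective).injOn]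
    simpa only [hw] using hsum
  have hconn := hk _ hS hsum'
  rw [Finset.coe_image] at hconn
  exact (e.symm.deleteEdges S').connected_iff.mpr hconn

theorem weightConn_congr_iso {_ : Fintype V} {_ : Fintype W} {G : SimpleGraph V}
    {G' : SimpleGraph W} {w : Sym2 V → ℕ} {w' : Sym2 W → ℕ} (e : G ≃g G')
    (hw : ∀ z, w' (Sym2.map e z) = w z) :
    weightConn G w = weightConn G' w' :=
  (weightConn_le_of_iso e fun z => by rw [← hw, Sym2.map_map]; simp).antisymm
    (weightConn_le_of_iso e.symm hw)

theorem connected_deleteEdges_of_sum_lt {_ : Fintype V} {G : SimpleGraph V} {w : Sym2 V → ℕ}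
    {S : Finset (Sym2 V)} (hS : ↑S ⊆ G.edgeSet) (h : ∑ e ∈ S, (w e : ℕ∞) < weightConn G w) :
    (G.deleteEdges S).Connected := by
  obtain ⟨m, hm, hlt⟩ := lt_sSup_iff.mp h
  exact hm S hS hlt

theorem connected_of_weightConn_pos {_ : Fintype V} {G : SimpleGraph V} {w : Sym2 V → ℕ}
    (h : 0 < weightConn G w) : G.Connected := by
  simpa using connected_deleteEdges_of_sum_lt (S := ∅) (by simp) (by simpa using h)

theorem weightConn_deleteEdges_le [Fintype V] (G : SimpleGraph V) (w : Sym2 V → ℕ)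
    (s : Set (Sym2 V)) :
    weightConn (G.deleteEdges s) w ≤ weightConn G w := by
  refine sSup_le_sSup fun k hk U hU hsum => ?_
  have hT : ↑(U.filter (· ∉ s)) ⊆ (G.deleteEdges s).edgeSet := by
    intro x hx
    rw [Finset.coe_filter] at hx
    rw [edgeSet_deleteEdges]
    exact ⟨hU hx.1, hx.2⟩
  have hconn := hk _ hT ((Finset.sum_le_sum_of_subset (Finset.filter_subset _ U)).trans_lt hsum)
  rw [deleteEdges_deleteEdges] at hconn
  refine hconn.mono (deleteEdges_anti fun x hx => ?_)
  by_cases hxs : x ∈ s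
  · exact .inl hxs
  · exact .inr (by simpa [hxs] using hx)

theorem compConn_univ [Fintype V] (G : SimpleGraph V) (w : Sym2 V → ℕ) :
    compConn G w Set.univ = weightConn G w := by
  refine weightConn_congr_iso G.induceUnivIso fun z => ?_
  induction z
  rfl

theorem compConn_induce [Fintype V] (G : SimpleGraph V) (w : Sym2 V → ℕ) (A : Set V) [Fintype A]
    (t : Set A) :
    compConn (G.induce A) (fun e => w (Sym2.map Subtype.val e)) t
      = compConn G w (Subtype.val '' t) := by
  refine weightConn_congr_iso (e := ⟨Equiv.Set.image Subtype.val t Subtype.val_injective, ?_⟩) ?_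
  · simp [comap_adj]
  · intro z
    induction z
    rfl

end WeightConn

section ConnMultiset

variable {V : Type*} [Fintype V]

theorem connMultiset_eq_sum (G : SimpleGraph V) (w : Sym2 V → ℕ)
    [Fintype G.ConnectedComponent] :
    connMultiset G w = ∑ c : G.ConnectedComponent, {compConn G w c.supp} := by
  rw [connMultiset, Finset.sum_eq_multiset_sum, ← Multiset.sum_map_singleton (Multiset.map _ _),
    Multiset.map_map]
  congr
  exact Subsingleton.elim _ _

theorem connMultiset_of_connected {G : SimpleGraph V} (w : Sym2 V → ℕ) (h : G.Connected) :
    connMultiset G w = {weightConn G w} := by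
  have := h.preconnected.subsingleton_connectedComponent
  have : Fintype G.ConnectedComponent := Fintype.ofFinite _
  obtain ⟨v⟩ := h.nonempty
  have hsupp : (G.connectedComponentMk v).supp = Set.univ :=
    Set.eq_univ_of_forall fun _ => Subsingleton.elim _ _
  rw [connMultiset_eq_sum, Fintype.sum_subsingleton _ (G.connectedComponentMk v), hsupp,
    compConn_univ]

end ConnMultiset

namespace SimpleGraph

variable {V : Type*} {H : SimpleGraph V} {A : Set V}

theorem ConnectedComponent.supp_map_induce (hA : ∀ ⦃u v⦄, H.Reachable u v → u ∈ A → v ∈ A)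
    (c : (H.induce A).ConnectedComponent) :
    (c.map (Embedding.induce A).toHom).supp = Subtype.val '' c.supp := by
  induction c using ConnectedComponent.ind with | h x =>
  ext v
  simp only [ConnectedComponent.map_mk, ConnectedComponent.mem_supp_iff,
    ConnectedComponent.eq]
  constructor
  · rintro ⟨p⟩
    have hv : v ∈ A := hA ⟨p.reverse⟩ x.2
    have hp : ∀ y ∈ p.support, y ∈ A := fun y hy => hA ⟨p.takeUntil y hy⟩ hv
    exact ⟨⟨v, hv⟩, ConnectedComponent.eq.mpr ⟨p.induce A hp⟩, rfl⟩
  · rintro ⟨y, hy, rfl⟩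
    exact (ConnectedComponent.eq.mp hy).map (Embedding.induce A).toHom

theorem bijective_sumElim_map_induce (hA : ∀ ⦃u v⦄, H.Reachable u v → u ∈ A → v ∈ A) :
    Function.Bijective (Sum.elim (ConnectedComponent.map (Embedding.induce (G := H) A).toHom)
      (ConnectedComponent.map (Embedding.induce (G := H) Aᶜ).toHom)) := by
  have hAc : ∀ ⦃u v⦄, H.Reachable u v → u ∈ Aᶜ → v ∈ Aᶜ := fun _ _ h hu hv => hu (hA h.symm hv)
  have map_injective {B : Set V} (hB : ∀ ⦃u v⦄, H.Reachable u v → u ∈ B → v ∈ B) :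
      Function.Injective (ConnectedComponent.map (Embedding.induce (G := H) B).toHom) :=
    fun c d h => by
    have := congrArg ConnectedComponent.supp h
    rw [ConnectedComponent.supp_map_induce hB, ConnectedComponent.supp_map_induce hB] at this
    exact ConnectedComponent.supp_injective (Set.image_injective.mpr Subtype.val_injective this)
  refine ⟨(map_injective hA).sumElim (map_injective hAc) fun c d hcd => ?_, ?_⟩
  · obtain ⟨x, hx⟩ := c.nonempty_supp
    have hx' : (x : V) ∈ (d.map (Embedding.induce Aᶜ).toHom).supp := by
      rw [← hcd, ConnectedComponent.supp_map_induce hA]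
      exact ⟨x, hx, rfl⟩
    rw [ConnectedComponent.supp_map_induce hAc] at hx'
    obtain ⟨y, -, hy⟩ := hx'
    exact y.2 (hy ▸ x.2)
  · refine ConnectedComponent.ind fun v => ?_
    by_cases hv : v ∈ A
    · exact ⟨.inl ((H.induce A).connectedComponentMk ⟨v, hv⟩), rfl⟩
    · exact ⟨.inr ((H.induce Aᶜ).connectedComponentMk ⟨v, hv⟩), rfl⟩

end SimpleGraph

theorem connMultiset_eq_add_compl {V : Type*} [Fintype V] (H : SimpleGraph V) (w : Sym2 V → ℕ)
    {A : Set V} (hA : ∀ ⦃u v⦄, H.Reachable u v → u ∈ A → v ∈ A) :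
    connMultiset H w = connMultiset (H.induce A) (fun e => w (Sym2.map Subtype.val e))
      + connMultiset (H.induce Aᶜ) (fun e => w (Sym2.map Subtype.val e)) := by
  have := Fintype.ofFinite H.ConnectedComponent
  have := Fintype.ofFinite (H.induce A).ConnectedComponent
  have := Fintype.ofFinite (H.induce Aᶜ).ConnectedComponent
  have hAc : ∀ ⦃u v⦄, H.Reachable u v → u ∈ Aᶜ → v ∈ Aᶜ := fun _ _ h hu hv => hu (hA h.symm hv)
  rw [connMultiset_eq_sum, connMultiset_eq_sum, connMultiset_eq_sum, ← Fintype.sum_sumElim]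
  refine (Fintype.sum_bijective _ (bijective_sumElim_map_induce hA) _ _ ?_).symm
  rintro (c | c)
  · rw [Sum.elim_inl, Sum.elim_inl, ConnectedComponent.supp_map_induce hA, compConn_induce]
  · rw [Sum.elim_inr, Sum.elim_inr, ConnectedComponent.supp_map_induce hAc, compConn_induce]

theorem Sym2.map_val_ne_map_val_compl {V : Type*} {A : Set V} (e : Sym2 A) (e' : Sym2 ↥Aᶜ) :
    e.map Subtype.val ≠ e'.map Subtype.val := by
  intro h
  induction e with | h x y =>
  have hx : (x : V) ∈ e'.map Subtype.val := h ▸ Sym2.mem_map.mpr ⟨x, Sym2.mem_mk_left x y, rfl⟩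
  obtain ⟨z, -, hz⟩ := Sym2.mem_map.mp hx
  exact z.2 (hz ▸ x.2)

section Restrict

variable {V : Type*}

noncomputable def restrictEdges (F : Finset (Sym2 V)) (A : Set V) : Finset (Sym2 A) :=
  F.preimage (Sym2.map Subtype.val) (Sym2.map.injective Subtype.val_injective).injOn

theorem coe_restrictEdges (F : Finset (Sym2 V)) (A : Set V) :
    (restrictEdges F A : Set (Sym2 A)) = Sym2.map Subtype.val ⁻¹' F :=
  Finset.coe_preimage _ _

theorem restrictEdges_subset_edgeSet {G : SimpleGraph V} {F : Finset (Sym2 V)}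
    (hF : ↑F ⊆ G.edgeSet) (A : Set V) : ↑(restrictEdges F A) ⊆ (G.induce A).edgeSet :=
  fun _ he =>
    (SimpleGraph.Embedding.induce A).map_mem_edgeSet_iff.mp (hF (Finset.mem_preimage.mp he))

theorem sum_restrictEdges_le (w : Sym2 V → ℕ) (F : Finset (Sym2 V)) (A : Set V) :
    ∑ e ∈ restrictEdges F A, w (Sym2.map Subtype.val e) ≤ ∑ e ∈ F, w e := by
  rw [restrictEdges, Finset.sum_preimage']
  exact Finset.sum_le_sum_of_subset (Finset.filter_subset _ F)

end Restrict

section Component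

variable {V : Type*} [Fintype V] {G : SimpleGraph V} {w : Sym2 V → ℕ} (c : G.ConnectedComponent)

theorem connMultiset_deleteEdges_eq_add (s : Set (Sym2 V)) :
    connMultiset (G.deleteEdges s) w
      = connMultiset ((G.induce c.supp).deleteEdges (Sym2.map Subtype.val ⁻¹' s))
          (fun e => w (Sym2.map Subtype.val e))
        + connMultiset ((G.induce c.suppᶜ).deleteEdges (Sym2.map Subtype.val ⁻¹' s))
          (fun e => w (Sym2.map Subtype.val e)) := by
  have hc : ∀ ⦃u v⦄, (G.deleteEdges s).Reachable u v → u ∈ c.supp → v ∈ c.supp :=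
    fun u v h hu => (c.mem_supp_iff v).mpr <|
      (ConnectedComponent.sound (h.mono (G.deleteEdges_le s))).symm.trans hu
  rw [connMultiset_eq_add_compl _ w hc, induce_deleteEdges, induce_deleteEdges]
  -- the two sides differ only in the `Fintype` instances on `c.supp` and `c.suppᶜ`
  rfl

theorem isYes_induce_compl_of_isYes {Λ : Multiset ℕ∞} {k : ℕ} {lj : ℕ∞}
    (hc : (k : ℕ∞) < compConn G w c.supp) (hlj : lj ∈ Λ)
    (hmax : ∀ x ∈ Λ, x ≤ compConn G w c.supp → x ≤ lj) (h : IsYes G w Λ k) :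
    IsYes (G.induce c.suppᶜ) (fun e => w (Sym2.map Subtype.val e)) (Λ.erase lj) k := by
  obtain ⟨F, hFG, hFk, hΛ⟩ := h
  have hsum (A : Set V) : ∑ e ∈ restrictEdges F A, w (Sym2.map Subtype.val e) ≤ k :=
    (sum_restrictEdges_le w F A).trans hFk
  have hlt : ∑ e ∈ restrictEdges F c.supp, (w (Sym2.map Subtype.val e) : ℕ∞)
      < compConn G w c.supp := by
    rw [← Nat.cast_sum]
    exact (Nat.cast_le.mpr (hsum _)).trans_lt hc
  have hconn := connected_deleteEdges_of_sum_lt (restrictEdges_subset_edgeSet hFG _) hlt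
  rw [domLE_iff_rel, connMultiset_deleteEdges_eq_add c, ← coe_restrictEdges, ← coe_restrictEdges,
    connMultiset_of_connected _ hconn, Multiset.singleton_add] at hΛ
  refine ⟨restrictEdges F c.suppᶜ, restrictEdges_subset_edgeSet hFG _, hsum _, ?_⟩
  have := hΛ.erase_erase hlj (Multiset.mem_cons_self _ _) fun x hx hxle =>
    hmax x hx (hxle.trans (weightConn_deleteEdges_le _ _ _))
  rwa [Multiset.erase_cons_head, ← domLE_iff_rel] at this

theorem isYes_of_isYes_induce_compl {Λ : Multiset ℕ∞} {k : ℕ} {lj : ℕ∞}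
    (hc : (k : ℕ∞) < compConn G w c.supp) (hlj : lj ∈ Λ) (hle : lj ≤ compConn G w c.supp)
    (h : IsYes (G.induce c.suppᶜ) (fun e => w (Sym2.map Subtype.val e)) (Λ.erase lj) k) :
    IsYes G w Λ k := by
  obtain ⟨F, hFG, hFk, hΛ⟩ := h
  have hconn : (G.induce c.supp).Connected := connected_of_weightConn_pos (hc.trans_le' bot_le)
  have hinj := Sym2.map.injective (Subtype.val_injective (p := (· ∈ c.suppᶜ)))
  refine ⟨F.image (Sym2.map Subtype.val), ?_, by rwa [Finset.sum_image hinj.injOn], ?_⟩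
  · rw [Finset.coe_image]
    rintro _ ⟨e, he, rfl⟩
    exact (Embedding.induce _).map_mem_edgeSet_iff.mpr (hFG he)
  · have hA : Sym2.map Subtype.val ⁻¹' (Sym2.map Subtype.val '' (F : Set (Sym2 ↥c.suppᶜ)))
        = (∅ : Set (Sym2 c.supp)) :=
      Set.eq_empty_of_forall_notMem fun e ⟨e', _, he⟩ =>
        Sym2.map_val_ne_map_val_compl e e' he.symm
    rw [domLE_iff_rel, Finset.coe_image, connMultiset_deleteEdges_eq_add c, hA,
      Set.preimage_image_eq _ hinj, deleteEdges_empty,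
      connMultiset_of_connected _ hconn, Multiset.singleton_add, ← Multiset.cons_erase hlj]
    exact (domLE_iff_rel.mp hΛ).cons hle

end Component

theorem stmt_17_general {V : Type*} [Fintype V] (G : SimpleGraph V) (w : Sym2 V → ℕ)
    (Λ : Multiset ℕ∞) (k : ℕ)
    (c : G.ConnectedComponent) (hc : (k : ℕ∞) < compConn G w c.supp)
    (lj : ℕ∞) (hlj : lj ∈ Λ) (hle : lj ≤ compConn G w c.supp)
    (hmax : ∀ x ∈ Λ, x ≤ compConn G w c.supp → x ≤ lj) :
    IsYes G w Λ k ↔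
      IsYes (G.induce c.suppᶜ) (fun e => w (Sym2.map Subtype.val e)) (Λ.erase lj) k :=
  ⟨isYes_induce_compl_of_isYes c hc hlj hmax, isYes_of_isYes_induce_compl c hc hlj hle⟩

/-- Let `C` be a connected component of the weighted graph `G` with `λ(C) > k`, suppose
some entry of the nondecreasing tuple `Λ` is at most `λ(C)` and let `λ_j` be the largest
such entry. Then `(G,w,Λ,k)` is a yes-instance of CGWC iff `(G − V(C), w, Λ', k)` is,
where `Λ'` is obtained from `Λ` by removing the entry `λ_j`. -/
theorem stmt_17 {V : Type*} [Fintype V] (G : SimpleGraph V) (w : Sym2 V → ℕ)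
    (hw : ∀ e ∈ G.edgeSet, 0 < w e) (Λ : Multiset ℕ∞) (k : ℕ)
    (c : G.ConnectedComponent) (hc : (k : ℕ∞) < compConn G w c.supp)
    (lj : ℕ∞) (hlj : lj ∈ Λ) (hle : lj ≤ compConn G w c.supp)
    (hmax : ∀ x ∈ Λ, x ≤ compConn G w c.supp → x ≤ lj) :
    IsYes G w Λ k ↔
      IsYes (G.induce c.suppᶜ) (fun e => w (Sym2.map Subtype.val e)) (Λ.erase lj) k :=
  stmt_17_general G w Λ k c hc lj hlj hle hmax
end
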